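/- arXiv:1311.6671 — 9 statements merged into one kernel-verified Lean document; each statement's English description precedes it below -/
import Mathlib

section
/- Let K ⊆ R^n be a symmetric convex body and Λ ⊆ R^n a full-rank lattice. Then for every positive integer p, (1 − 1/p) · μ(K, Λ) ≤ max over cosets c ∈ (1/p)Λ modulo Λ of d_K(Λ, c) ≤ μ(K, Λ), where the maximum is over any set of representatives of the quotient group ((1/p)Λ)/Λ. -/
open MeasureTheory Pointwise

/-- Distance from the point `x` to the set `L` (e.g. a lattice) under the gauge of `K`:
`d_K(L, x) = inf_{y ∈ L} ‖y - x‖_K`. -/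
noncomputable def gaugeDist {n : ℕ} (K L : Set (Fin n → ℝ)) (x : Fin n → ℝ) : ℝ :=
  ⨅ y : L, gauge K ((y : Fin n → ℝ) - x)

/-- The covering radius `μ(K, L) = inf {s ≥ 0 : L + sK = ℝⁿ}`. -/
noncomputable def covRad {n : ℕ} (K L : Set (Fin n → ℝ)) : ℝ :=
  sInf {s : ℝ | 0 ≤ s ∧ L + s • K = Set.univ}

/-! The covering radius is the largest `K`-distance of a point to `Λ`, which gives the upper
bound. For the lower bound, let `M` be the maximum over `R` and fix `x`. For every `z ∈ Λ`, the
point `z / p` lies in `(1/p)Λ`, hence in the coset of some `r ∈ R`, so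
`d_K(Λ, x) ≤ d_K(Λ, r) + ‖z/p - x‖_K ≤ M + ‖z - p x‖_K / p`. Minimising over `z` gives
`d_K(Λ, x) ≤ M + d_K(Λ, p x) / p ≤ M + μ / p`, and the supremum over `x` gives
`μ ≤ M + μ / p`. -/

theorem Convex.mem_nhds_zero_of_neg_mem {E : Type*} [AddCommGroup E] [Module ℝ E]
    [TopologicalSpace E] [IsTopologicalAddGroup E] [ContinuousSMul ℝ E] {K : Set E}
    (hKconv : Convex ℝ K) (hKint : (interior K).Nonempty) (hKsym : ∀ x ∈ K, -x ∈ K) :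
    K ∈ nhds 0 := by
  obtain ⟨z, hz⟩ := hKint
  have := hKconv.combo_interior_self_mem_interior hz (hKsym z (interior_subset hz))
    (by norm_num : (0 : ℝ) < 1 / 2) (by norm_num : (0 : ℝ) ≤ 1 / 2) (by norm_num)
  rw [← smul_add, add_neg_cancel, smul_zero] at this
  exact mem_interior_iff_mem_nhds.mp this

theorem mem_smul_of_gauge_lt {E : Type*} [AddCommGroup E] [Module ℝ E] {K : Set E}
    (hKconv : Convex ℝ K) (hK0 : (0 : E) ∈ K) (hKabs : Absorbent ℝ K) {v : E} {t : ℝ}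
    (h : gauge K v < t) : v ∈ t • K := by
  have ht : 0 < t := (gauge_nonneg v).trans_lt h
  rw [Set.mem_smul_set_iff_inv_smul_mem₀ ht.ne']
  refine setOfPred_gauge_lt_one_subset_self hKconv hK0 hKabs ?_
  rw [Set.mem_ofPred, gauge_smul_of_nonneg (inv_nonneg.mpr ht.le), smul_eq_mul,
    inv_mul_lt_one₀ ht]
  exact h

section gaugeDist

variable {n : ℕ} {K L : Set (Fin n → ℝ)}

theorem gaugeDist_nonneg (x : Fin n → ℝ) : 0 ≤ gaugeDist K L x :=
  Real.iInf_nonneg fun _ => gauge_nonneg _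

theorem gaugeDist_le_gauge {w : Fin n → ℝ} (hw : w ∈ L) (x : Fin n → ℝ) :
    gaugeDist K L x ≤ gauge K (w - x) :=
  ciInf_le ⟨0, by rintro _ ⟨y, rfl⟩; exact gauge_nonneg _⟩ (⟨w, hw⟩ : L)

theorem le_gaugeDist [Nonempty L] {x : Fin n → ℝ} {a : ℝ}
    (h : ∀ w ∈ L, a ≤ gauge K (w - x)) : a ≤ gaugeDist K L x :=
  le_ciInf fun w => h w w.2

theorem gaugeDist_le_add_gauge [Nonempty L] (hKconv : Convex ℝ K) (hKabs : Absorbent ℝ K)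
    (x y : Fin n → ℝ) : gaugeDist K L x ≤ gaugeDist K L y + gauge K (y - x) := by
  rw [← sub_le_iff_le_add]
  refine le_gaugeDist fun w hw => sub_le_iff_le_add.mpr ?_
  calc gaugeDist K L x ≤ gauge K (w - x) := gaugeDist_le_gauge hw x
    _ = gauge K ((w - y) + (y - x)) := by rw [sub_add_sub_cancel]
    _ ≤ gauge K (w - y) + gauge K (y - x) := gauge_add_le hKconv hKabs _ _

theorem gaugeDist_le_of_sub_mem {Λ : Submodule ℤ (Fin n → ℝ)} {x y : Fin n → ℝ}
    (hxy : x - y ∈ Λ) : gaugeDist K Λ x ≤ gaugeDist K Λ y :=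
  le_gaugeDist fun w hw => by
    convert gaugeDist_le_gauge (K := K) (Λ.add_mem hw hxy) x using 2
    abel

theorem gaugeDist_le_of_mem_add_smul (hKsym : ∀ x ∈ K, -x ∈ K) {s : ℝ} (hs : 0 ≤ s)
    {x : Fin n → ℝ} (hx : x ∈ L + s • K) : gaugeDist K L x ≤ s := by
  obtain ⟨w, hw, _, ⟨k, hk, rfl⟩, rfl⟩ := hx
  calc gaugeDist K L (w + s • k) ≤ gauge K (-(s • k)) := by
        simpa using gaugeDist_le_gauge hw (w + s • k)
    _ = gauge K (s • k) := gauge_neg hKsym _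
    _ ≤ s := gauge_le_of_mem hs (Set.smul_mem_smul_set hk)

theorem mem_add_smul_of_gaugeDist_lt [Nonempty L] (hKconv : Convex ℝ K)
    (hK0 : (0 : Fin n → ℝ) ∈ K) (hKabs : Absorbent ℝ K) (hKsym : ∀ x ∈ K, -x ∈ K)
    {x : Fin n → ℝ} {t : ℝ} (h : gaugeDist K L x < t) : x ∈ L + t • K := by
  obtain ⟨⟨w, hw⟩, hwt⟩ := exists_lt_of_ciInf_lt h
  have hxw : x - w ∈ t • K := by
    rw [← gauge_neg hKsym, neg_sub] at hwt
    exact mem_smul_of_gauge_lt hKconv hK0 hKabs hwt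
  exact ⟨w, hw, x - w, hxw, add_sub_cancel _ _⟩

theorem add_smul_eq_univ_of_gaugeDist_lt [Nonempty L] (hKconv : Convex ℝ K)
    (hK0 : (0 : Fin n → ℝ) ∈ K) (hKabs : Absorbent ℝ K) (hKsym : ∀ x ∈ K, -x ∈ K) {t : ℝ}
    (h : ∀ x, gaugeDist K L x < t) : L + t • K = Set.univ :=
  Set.eq_univ_of_forall fun x => mem_add_smul_of_gaugeDist_lt hKconv hK0 hKabs hKsym (h x)

theorem covRad_eq_iSup_gaugeDist [Nonempty L] (hKconv : Convex ℝ K)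
    (hK0 : (0 : Fin n → ℝ) ∈ K) (hKabs : Absorbent ℝ K) (hKsym : ∀ x ∈ K, -x ∈ K)
    (hbdd : BddAbove (Set.range (gaugeDist K L))) :
    covRad K L = ⨆ x, gaugeDist K L x := by
  set T := ⨆ x, gaugeDist K L x
  have hT : 0 ≤ T := le_ciSup_of_le hbdd 0 (gaugeDist_nonneg 0)
  have hcover : ∀ ε > 0, L + (T + ε) • K = Set.univ := fun ε hε =>
    add_smul_eq_univ_of_gaugeDist_lt hKconv hK0 hKabs hKsym fun x =>
      (le_ciSup hbdd x).trans_lt (lt_add_of_pos_right T hε)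
  refine le_antisymm (le_of_forall_pos_le_add fun ε hε => ?_) (ciSup_le fun x => ?_)
  · exact csInf_le ⟨0, fun s hs => hs.1⟩ ⟨by positivity, hcover ε hε⟩
  · exact le_csInf ⟨T + 1, by positivity, hcover 1 one_pos⟩ fun s hs =>
      gaugeDist_le_of_mem_add_smul hKsym hs.1 (hs.2 ▸ Set.mem_univ x)

theorem bddAbove_range_gaugeDist_span (hKconv : Convex ℝ K) (hK0 : K ∈ nhds 0)
    (b : Module.Basis (Fin n) ℝ (Fin n → ℝ)) :
    BddAbove (Set.range (gaugeDist K (Submodule.span ℤ (Set.range b)))) := by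
  have hcpt := (ZSpan.fundamentalDomain_isBounded b).neg.isCompact_closure
  obtain ⟨C, hC⟩ :=
    hcpt.bddAbove_image (f := gauge K) (continuous_gauge hKconv hK0).continuousOn
  refine ⟨C, ?_⟩
  rintro _ ⟨x, rfl⟩
  have hfract := Set.neg_mem_neg.mpr (ZSpan.fract_mem_fundamentalDomain b x)
  calc gaugeDist K _ x ≤ gauge K (ZSpan.floor b x - x) :=
        gaugeDist_le_gauge (ZSpan.floor b x).2 x
    _ = gauge K (-ZSpan.fract b x) := by rw [ZSpan.fract_apply, neg_sub]
    _ ≤ C := hC ⟨_, subset_closure hfract, rfl⟩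

theorem mul_sub_iSup_gaugeDist_le (hKconv : Convex ℝ K) (hKabs : Absorbent ℝ K)
    {Λ : Submodule ℤ (Fin n → ℝ)} {p : ℝ} (hp : 0 < p) {R : Set (Fin n → ℝ)}
    (hrep : ∀ c ∈ p⁻¹ • (Λ : Set (Fin n → ℝ)), ∃ r ∈ R, c - r ∈ Λ)
    (hbdd : BddAbove (Set.range fun c : R => gaugeDist K Λ c)) (x : Fin n → ℝ) :
    p * (gaugeDist K Λ x - ⨆ c : R, gaugeDist K Λ c) ≤ gaugeDist K Λ (p • x) := by
  refine le_gaugeDist fun z hz => ?_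
  obtain ⟨r, hr, hzr⟩ := hrep (p⁻¹ • z) (Set.smul_mem_smul_set hz)
  have hscale : gauge K (p⁻¹ • z - x) = p⁻¹ * gauge K (z - p • x) := by
    rw [← smul_eq_mul, ← gauge_smul_of_nonneg (inv_nonneg.mpr hp.le), smul_sub,
      inv_smul_smul₀ hp.ne']
  have : gaugeDist K Λ x ≤ (⨆ c : R, gaugeDist K Λ c) + p⁻¹ * gauge K (z - p • x) :=
    calc gaugeDist K Λ x ≤ gaugeDist K Λ (p⁻¹ • z) + gauge K (p⁻¹ • z - x) :=
          gaugeDist_le_add_gauge hKconv hKabs x _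
      _ ≤ gaugeDist K Λ r + gauge K (p⁻¹ • z - x) := by
          gcongr; exact gaugeDist_le_of_sub_mem hzr
      _ ≤ (⨆ c : R, gaugeDist K Λ c) + p⁻¹ * gauge K (z - p • x) := by
          rw [hscale]; gcongr; exact le_ciSup hbdd ⟨r, hr⟩
  rw [← le_div_iff₀' hp, div_eq_inv_mul]
  linarith

end gaugeDist

theorem stmt_3_general (n : ℕ) (K : Set (Fin n → ℝ))
    (hKconv : Convex ℝ K) (hKint : (interior K).Nonempty)
    (hKsym : K = -K)
    (b : Module.Basis (Fin n) ℝ (Fin n → ℝ)) (p : ℕ) (hp : 0 < p)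
    (R : Set (Fin n → ℝ))
    (hrep : ∀ c ∈ (p : ℝ)⁻¹ • (Submodule.span ℤ (Set.range b) : Set (Fin n → ℝ)),
      ∃ r ∈ R, c - r ∈ (Submodule.span ℤ (Set.range b) : Set (Fin n → ℝ))) :
    (1 - 1 / (p : ℝ)) * covRad K (Submodule.span ℤ (Set.range b) : Set (Fin n → ℝ))
        ≤ (⨆ c : R, gaugeDist K (Submodule.span ℤ (Set.range b) : Set (Fin n → ℝ))
            (c : Fin n → ℝ))
    ∧ (⨆ c : R, gaugeDist K (Submodule.span ℤ (Set.range b) : Set (Fin n → ℝ))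
          (c : Fin n → ℝ))
        ≤ covRad K (Submodule.span ℤ (Set.range b) : Set (Fin n → ℝ)) := by
  have hKneg : ∀ x ∈ K, -x ∈ K := fun x hx => by rw [hKsym]; exact Set.neg_mem_neg.mpr hx
  have hK0 := hKconv.mem_nhds_zero_of_neg_mem hKint hKneg
  have hKabs := absorbent_nhds_zero (𝕜 := ℝ) hK0
  have hbdd := bddAbove_range_gaugeDist_span hKconv hK0 b
  have hμ := covRad_eq_iSup_gaugeDist hKconv (mem_of_mem_nhds hK0) hKabs hKneg hbdd
  have hbddR := hbdd.mono (Set.range_comp_subset_range ((↑) : R → Fin n → ℝ) _)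
  obtain ⟨r, hr, -⟩ := hrep 0 ⟨0, zero_mem _, smul_zero _⟩
  have : Nonempty R := ⟨⟨r, hr⟩⟩
  have hp' : (0 : ℝ) < p := Nat.cast_pos.mpr hp
  refine ⟨?_, ciSup_le fun c => hμ ▸ le_ciSup hbdd c⟩
  set μ := covRad K (Submodule.span ℤ (Set.range b) : Set (Fin n → ℝ))
  set M := ⨆ c : R, gaugeDist K (Submodule.span ℤ (Set.range b) : Set (Fin n → ℝ)) c
  have hlower : μ ≤ M + μ / p := by
    conv_lhs => rw [hμ]
    refine ciSup_le fun x => ?_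
    have := (mul_sub_iSup_gaugeDist_le hKconv hKabs hp' hrep hbddR x).trans
      (hμ ▸ le_ciSup hbdd ((p : ℝ) • x))
    rw [← le_div_iff₀' hp'] at this
    linarith
  calc (1 - 1 / (p : ℝ)) * μ = μ - μ / p := by ring
    _ ≤ M := by linarith

/-- For a symmetric convex body `K`, a full-rank lattice
`Λ = span ℤ (range b)`, a positive integer `p`, and any set `R ⊆ (1/p)Λ` of
representatives of the cosets of `((1/p)Λ)/Λ`, one has
`(1 - 1/p) μ(K, Λ) ≤ max_{c ∈ R} d_K(Λ, c) ≤ μ(K, Λ)`. -/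
theorem stmt_3 (n : ℕ) (K : Set (Fin n → ℝ))
    (hKcpt : IsCompact K) (hKconv : Convex ℝ K) (hKint : (interior K).Nonempty)
    (hKsym : K = -K)
    (b : Module.Basis (Fin n) ℝ (Fin n → ℝ)) (p : ℕ) (hp : 0 < p)
    (R : Set (Fin n → ℝ))
    (hR : R ⊆ (p : ℝ)⁻¹ • (Submodule.span ℤ (Set.range b) : Set (Fin n → ℝ)))
    (hrep : ∀ c ∈ (p : ℝ)⁻¹ • (Submodule.span ℤ (Set.range b) : Set (Fin n → ℝ)),
      ∃ r ∈ R, c - r ∈ (Submodule.span ℤ (Set.range b) : Set (Fin n → ℝ))) :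
    (1 - 1 / (p : ℝ)) * covRad K (Submodule.span ℤ (Set.range b) : Set (Fin n → ℝ))
        ≤ (⨆ c : R, gaugeDist K (Submodule.span ℤ (Set.range b) : Set (Fin n → ℝ))
            (c : Fin n → ℝ))
    ∧ (⨆ c : R, gaugeDist K (Submodule.span ℤ (Set.range b) : Set (Fin n → ℝ))
          (c : Fin n → ℝ))
        ≤ covRad K (Submodule.span ℤ (Set.range b) : Set (Fin n → ℝ)) :=
  stmt_3_general n K hKconv hKint hKsym b p hp R hrep
end

section
/- Let K ⊆ R^n be a convex body and let Λ ⊆ R^n be a full-rank lattice with basis B = (b_1, …, b_n). Let π_1, …, π_n be the Gram–Schmidt projections of B, and let P∘(B) = B·[−1/2, 1/2)^n be the half-open fundamental parallelepiped of B. Then for every x ∈ R^n and every i ∈ {1, …, n}, the number of lattice points |π_i(K + x) ∩ π_i(Λ)| is at most N(K, P∘(B)). In other words, K is N(K, P∘(B))-Schnorr–Euchner enumerable with respect to Λ with basis B. -/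
open MeasureTheory Pointwise

/-!
Two lattice vectors whose projections `π_i` both lie in `π_i (s + P∘(B))` have, in every
coordinate `j ≥ i`, integer coordinates in a common half-open interval of length `1`; so these
coordinates agree and the two projections coincide. Each translate of `P∘(B)` therefore meets
`π_i(Λ)` in at most one point after projecting, and covering `K + x` by `N(K, P∘(B))` translates
of `P∘(B)` (finitely many, as `K` is compact) gives the bound.
-/

/-- The Gram–Schmidt projections of a basis `b`: `gsProj b i` is the orthogonal projection
onto the orthogonal complement of `span(b_0, …, b_{i-1})` (so `gsProj b 0` is the identity). -/
noncomputable def gsProj {n : ℕ} (b : Module.Basis (Fin n) ℝ (EuclideanSpace ℝ (Fin n))) (i : Fin n) :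
    EuclideanSpace ℝ (Fin n) → EuclideanSpace ℝ (Fin n) :=
  fun x => (Submodule.orthogonalProjectionOnto ((Submodule.span ℝ (⇑b '' {j : Fin n | j < i}))ᗮ) x :
    EuclideanSpace ℝ (Fin n))

/-- The half-open fundamental parallelepiped `P∘(B) = B·[-1/2, 1/2)ⁿ` of a basis `b`. -/
def halfOpenPar {n : ℕ} (b : Module.Basis (Fin n) ℝ (EuclideanSpace ℝ (Fin n))) :
    Set (EuclideanSpace ℝ (Fin n)) :=
  {x | ∀ i, b.repr x i ∈ Set.Ico (-(1 : ℝ) / 2) (1 / 2)}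

/-- The covering number `N(A, B)`: the minimum cardinality of a finite set `T` with
`A ⊆ T + B`. -/
noncomputable def coveringNumber {α : Type*} [AddCommGroup α] (A B : Set α) : ℕ :=
  sInf {m : ℕ | ∃ T : Finset α, T.card = m ∧ A ⊆ ↑T + B}

/-- `K` is `α`-Schnorr–Euchner enumerable with respect to the lattice (set) `L` with basis `b`:
for every Gram–Schmidt projection `π_i` of `b` and every shift `t`,
`π_i(K + t) ∩ π_i(L)` is finite of cardinality at most `α`. -/
def IsSE {n : ℕ} (b : Module.Basis (Fin n) ℝ (EuclideanSpace ℝ (Fin n)))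
    (L K : Set (EuclideanSpace ℝ (Fin n))) (α : ℝ) : Prop :=
  ∀ (i : Fin n) (t : EuclideanSpace ℝ (Fin n)),
    (gsProj b i '' (K + {t}) ∩ gsProj b i '' L).Finite ∧
    ((gsProj b i '' (K + {t}) ∩ gsProj b i '' L).ncard : ℝ) ≤ α

theorem exists_finset_card_eq_coveringNumber {α : Type*} [AddCommGroup α] {A B : Set α}
    (h : ∃ T : Finset α, A ⊆ ↑T + B) :
    ∃ T : Finset α, T.card = coveringNumber A B ∧ A ⊆ ↑T + B := by
  obtain ⟨T, hT⟩ := h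
  exact Nat.sInf_mem (s := {m | ∃ T : Finset α, T.card = m ∧ A ⊆ ↑T + B})
    ⟨T.card, T, rfl, hT⟩

theorem image_inter_finite_and_ncard_le_of_subset_add {α β : Type*} [Add α] {f : α → β}
    {A B : Set α} {L : Set β} {T : Finset α} (hA : A ⊆ ↑T + B)
    (hB : ∀ s, (f '' ({s} + B) ∩ L).Subsingleton) :
    (f '' A ∩ L).Finite ∧ (f '' A ∩ L).ncard ≤ T.card := by
  have hsub : f '' A ∩ L ⊆ ⋃ s ∈ T, f '' ({s} + B) ∩ L := by
    rintro _ ⟨⟨x, hx, rfl⟩, hL⟩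
    obtain ⟨s, hs, a, ha, rfl⟩ := hA hx
    exact Set.mem_iUnion₂.mpr ⟨s, hs, ⟨s + a, Set.add_mem_add rfl ha, rfl⟩, hL⟩
  have hfin : (⋃ s ∈ T, f '' ({s} + B) ∩ L).Finite :=
    T.finite_toSet.biUnion fun s _ => (hB s).finite
  refine ⟨hfin.subset hsub, ?_⟩
  calc (f '' A ∩ L).ncard ≤ (⋃ s ∈ T, f '' ({s} + B) ∩ L).ncard := Set.ncard_le_ncard hsub hfin
    _ ≤ ∑ s ∈ T, (f '' ({s} + B) ∩ L).ncard := T.set_ncard_biUnion_le _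
    _ ≤ ∑ _s ∈ T, 1 := Finset.sum_le_sum fun s _ =>
        (Set.ncard_le_one (hB s).finite).mpr fun _ hx _ hy => hB s hx hy
    _ = T.card := by simp

theorem Int.eq_of_cast_sub_mem_Ico {m m' : ℤ} {c : ℝ}
    (hm : (m : ℝ) - c ∈ Set.Ico (-(1 : ℝ) / 2) (1 / 2))
    (hm' : (m' : ℝ) - c ∈ Set.Ico (-(1 : ℝ) / 2) (1 / 2)) : m = m' := by
  have h : |((m - m' : ℤ) : ℝ)| < 1 := by
    push_cast
    rw [abs_lt]
    constructor <;> linarith [hm.1, hm.2, hm'.1, hm'.2]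
  rwa [← Int.cast_abs, ← Int.cast_one, Int.cast_lt, Int.abs_lt_one_iff, sub_eq_zero] at h

section Basis

variable {n : ℕ} (b : Module.Basis (Fin n) ℝ (EuclideanSpace ℝ (Fin n)))

theorem gsProj_eq_gsProj_iff (i : Fin n) {x y : EuclideanSpace ℝ (Fin n)} :
    gsProj b i x = gsProj b i y ↔ ∀ j, i ≤ j → b.repr x j = b.repr y j := by
  set V := Submodule.span ℝ (⇑b '' {j : Fin n | j < i})
  calc gsProj b i x = gsProj b i y
      ↔ Vᗮ.orthogonalProjectionOnto (x - y) = 0 := by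
        rw [map_sub, sub_eq_zero, Subtype.ext_iff]; rfl
    _ ↔ x - y ∈ V := by
        rw [Submodule.orthogonalProjectionOnto_eq_zero_iff, Submodule.orthogonal_orthogonal]
    _ ↔ ∀ j, i ≤ j → b.repr x j = b.repr y j := by
        rw [Module.Basis.mem_span_image]
        simp only [Set.subset_def, Finset.mem_coe, Finsupp.mem_support_iff, map_sub,
          Finsupp.sub_apply, sub_ne_zero, Set.mem_ofPred_eq]
        exact forall_congr' fun j => by rw [← not_lt, not_imp_comm]

theorem repr_mem_range_intCast_of_mem_span {z : EuclideanSpace ℝ (Fin n)}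
    (hz : z ∈ Submodule.span ℤ (Set.range b)) (j : Fin n) :
    b.repr z j ∈ Set.range ((↑) : ℤ → ℝ) :=
  (b.mem_span_iff_repr_mem ℤ z).mp hz j

theorem gsProj_image_inter_subsingleton (i : Fin n) (s : EuclideanSpace ℝ (Fin n)) :
    (gsProj b i '' ({s} + halfOpenPar b) ∩
      gsProj b i '' (Submodule.span ℤ (Set.range b) : Set _)).Subsingleton := by
  rw [Set.singleton_add]
  rintro _ ⟨⟨_, ⟨a, ha, rfl⟩, hl⟩, l, hlΛ, rfl⟩ _ ⟨⟨_, ⟨a', ha', rfl⟩, hm⟩, m, hmΛ, rfl⟩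
  rw [gsProj_eq_gsProj_iff] at hl hm ⊢
  intro j hj
  obtain ⟨zl, hzl⟩ := repr_mem_range_intCast_of_mem_span b hlΛ j
  obtain ⟨zm, hzm⟩ := repr_mem_range_intCast_of_mem_span b hmΛ j
  have hal : (zl : ℝ) - b.repr s j ∈ Set.Ico (-(1 : ℝ) / 2) (1 / 2) := by
    rw [hzl, ← hl j hj, map_add, Finsupp.add_apply, add_sub_cancel_left]
    exact ha j
  have ham : (zm : ℝ) - b.repr s j ∈ Set.Ico (-(1 : ℝ) / 2) (1 / 2) := by
    rw [hzm, ← hm j hj, map_add, Finsupp.add_apply, add_sub_cancel_left]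
    exact ha' j
  rw [← hzl, ← hzm, Int.eq_of_cast_sub_mem_Ico hal ham]

theorem zero_mem_interior_halfOpenPar :
    (0 : EuclideanSpace ℝ (Fin n)) ∈ interior (halfOpenPar b) := by
  have hbox : Set.univ.pi (fun _ => Set.Ioo (-(1 : ℝ) / 2) (1 / 2)) ∈ nhds (b.equivFunL 0) := by
    refine set_pi_mem_nhds Set.finite_univ fun j _ => Ioo_mem_nhds ?_ ?_ <;> norm_num
  refine mem_interior_iff_mem_nhds.mpr
    (Filter.mem_of_superset (b.equivFunL.continuous.continuousAt.preimage_mem_nhds hbox) ?_)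
  intro x hx j
  exact Set.Ioo_subset_Ico_self (hx j (Set.mem_univ j))

theorem IsCompact.exists_finset_subset_add_halfOpenPar {K : Set (EuclideanSpace ℝ (Fin n))}
    (hK : IsCompact K) : ∃ T : Finset (EuclideanSpace ℝ (Fin n)), K ⊆ ↑T + halfOpenPar b := by
  obtain ⟨t, ht⟩ :=
    compact_covered_by_add_left_translates hK ⟨0, zero_mem_interior_halfOpenPar b⟩
  refine ⟨t.image Neg.neg, fun y hy => ?_⟩
  obtain ⟨g, hg, hgy⟩ := Set.mem_iUnion₂.mp (ht hy)
  exact ⟨-g, Finset.mem_image_of_mem _ hg, g + y, hgy, neg_add_cancel_left g y⟩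

end Basis

theorem stmt_4_general (n : ℕ) (b : Module.Basis (Fin n) ℝ (EuclideanSpace ℝ (Fin n)))
    (K : Set (EuclideanSpace ℝ (Fin n)))
    (hKcpt : IsCompact K) :
    IsSE b (Submodule.span ℤ (Set.range b) : Set (EuclideanSpace ℝ (Fin n))) K
      (coveringNumber K (halfOpenPar b)) := by
  intro i t
  obtain ⟨T, hTcard, hT⟩ :=
    exists_finset_card_eq_coveringNumber (hKcpt.exists_finset_subset_add_halfOpenPar b)
  have hTt : K + {t} ⊆ ↑(T + {t}) + halfOpenPar b := by
    rw [Finset.coe_add, Finset.coe_singleton, add_right_comm]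
    exact Set.add_subset_add_right hT
  obtain ⟨hfin, hcard⟩ :=
    image_inter_finite_and_ncard_le_of_subset_add hTt (gsProj_image_inter_subsingleton b i)
  refine ⟨hfin, ?_⟩
  rw [Finset.card_add_singleton, hTcard] at hcard
  exact_mod_cast hcard

/-- For a convex body `K` and a full-rank lattice `Λ = span ℤ (range b)`,
for every `x` and every `i`, `|π_i(K + x) ∩ π_i(Λ)| ≤ N(K, P∘(B))`; i.e. `K` is
`N(K, P∘(B))`-Schnorr–Euchner enumerable with respect to `Λ` with basis `b`. -/
theorem stmt_4 (n : ℕ) (b : Module.Basis (Fin n) ℝ (EuclideanSpace ℝ (Fin n)))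
    (K : Set (EuclideanSpace ℝ (Fin n)))
    (hKcpt : IsCompact K) (hKconv : Convex ℝ K) (hKint : (interior K).Nonempty) :
    IsSE b (Submodule.span ℤ (Set.range b) : Set (EuclideanSpace ℝ (Fin n))) K
      (coveringNumber K (halfOpenPar b)) :=
  stmt_4_general n b K hKcpt
end

section
/- Let K ⊆ R^n be a convex body that is α-Schnorr–Euchner enumerable with respect to a full-rank lattice Λ with basis B = (b_1, …, b_n). Let M ⊇ Λ be a superlattice of Λ of finite index [M : Λ], and let B_M be a directional basis of M with respect to B. Then K is (α · [M : Λ])-Schnorr–Euchner enumerable with respect to M with basis B_M. -/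
open MeasureTheory Pointwise


/-!
A directional basis of `M` has the same Gram–Schmidt projections `πᵢ` as `b`. Since `M` is the
union of `[M : Λ]` cosets `r + Λ`, every point of `πᵢ(K + t) ∩ πᵢ(M)` has the form `πᵢ(r) + y`
with `y ∈ πᵢ(K + t - r) ∩ πᵢ(Λ)`, a set of at most `α` points.
-/

open Set Submodule

section GramSchmidt

lemma span_image_lt_le_of_span_image_le_le {ι R V : Type*} [LinearOrder ι] [Semiring R]
    [AddCommMonoid V] [Module R V] {b c : ι → V}
    (h : ∀ j, span R (c '' {k | k ≤ j}) ≤ span R (b '' {k | k ≤ j})) (i : ι) :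
    span R (c '' {j | j < i}) ≤ span R (b '' {j | j < i}) := by
  rw [span_le]
  rintro _ ⟨j, hj, rfl⟩
  exact span_mono (image_mono fun k hk => lt_of_le_of_lt hk hj)
    (h j (subset_span ⟨j, le_rfl, rfl⟩))

variable {n : ℕ}

lemma gsProj_eq_starProjection (b : Module.Basis (Fin n) ℝ (EuclideanSpace ℝ (Fin n)))
    (i : Fin n) : gsProj b i = (span ℝ (b '' {j | j < i}))ᗮ.starProjection :=
  rfl

lemma gsProj_eq_of_span_image_le_eq {b c : Module.Basis (Fin n) ℝ (EuclideanSpace ℝ (Fin n))}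
    (h : ∀ i, span ℝ (c '' {j | j ≤ i}) = span ℝ (b '' {j | j ≤ i})) :
    gsProj c = gsProj b := by
  funext i
  rw [gsProj_eq_starProjection, gsProj_eq_starProjection,
    (span_image_lt_le_of_span_image_le_le (fun j => (h j).le) i).antisymm
      (span_image_lt_le_of_span_image_le_le (fun j => (h j).ge) i)]

end GramSchmidt

section Counting

variable {E F G : Type*} [AddCommGroup E] [AddCommGroup F] [FunLike G E F]
  [AddMonoidHomClass G E F]

lemma image_inter_image_subset_iUnion_vadd (f : G) (L M : AddSubgroup E) (S : Set E) :
    f '' S ∩ f '' M ⊆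
      ⋃ q : M ⧸ L.addSubgroupOf M, f q.out +ᵥ (f '' (S + {-(q.out : E)}) ∩ f '' L) := by
  rintro _ ⟨⟨s, hs, hfs⟩, x, hx, rfl⟩
  set q : M ⧸ L.addSubgroupOf M := QuotientAddGroup.mk ⟨x, hx⟩
  have hxq : x - q.out ∈ L := by
    have := AddSubgroup.mem_addSubgroupOf.1 (QuotientAddGroup.eq.1 q.out_eq')
    simpa [sub_eq_neg_add] using this
  refine mem_iUnion.2 ⟨q, f (x - q.out), ⟨⟨s + -q.out, ?_, ?_⟩, x - q.out, hxq, rfl⟩, ?_⟩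
  · exact add_mem_add hs (mem_singleton _)
  · rw [map_add, map_neg, map_sub, hfs, sub_eq_add_neg]
  · simp

theorem finite_ncard_image_inter_le_mul_relIndex (f : G) (L M : AddSubgroup E)
    [L.IsFiniteRelIndex M] (S : Set E) {α : ℝ}
    (h : ∀ v, (f '' (S + {v}) ∩ f '' L).Finite ∧ ((f '' (S + {v}) ∩ f '' L).ncard : ℝ) ≤ α) :
    (f '' S ∩ f '' M).Finite ∧ ((f '' S ∩ f '' M).ncard : ℝ) ≤ α * L.relIndex M := by
  have := Fintype.ofFinite (M ⧸ L.addSubgroupOf M)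
  set A : M ⧸ L.addSubgroupOf M → Set F :=
    fun q => f q.out +ᵥ (f '' (S + {-(q.out : E)}) ∩ f '' L)
  have hcover : f '' S ∩ f '' M ⊆ ⋃ q, A q := image_inter_image_subset_iUnion_vadd f L M S
  have hfinite : (⋃ q, A q).Finite := finite_iUnion fun q => (h _).1.vadd_set
  refine ⟨hfinite.subset hcover, ?_⟩
  calc ((f '' S ∩ f '' M).ncard : ℝ) ≤ (⋃ q, A q).ncard := by
        exact_mod_cast ncard_le_ncard hcover hfinite
    _ ≤ ∑ q, ((A q).ncard : ℝ) := by
        exact_mod_cast (by simpa using Finset.set_ncard_biUnion_le Finset.univ A)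
    _ ≤ ∑ _q : M ⧸ L.addSubgroupOf M, α := by
        gcongr with q
        rw [ncard_vadd_set]
        exact (h _).2
    _ = α * L.relIndex M := by
        rw [Finset.sum_const, Finset.card_univ, nsmul_eq_mul, mul_comm, ← Nat.card_eq_fintype_card]
        rfl

end Counting

theorem stmt_6_general (n : ℕ) (b bM : Module.Basis (Fin n) ℝ (EuclideanSpace ℝ (Fin n)))
    (K : Set (EuclideanSpace ℝ (Fin n)))
    (α : ℝ)
    (hfin : 0 < (Submodule.span ℤ (Set.range b)).toAddSubgroup.relIndex
      (Submodule.span ℤ (Set.range bM)).toAddSubgroup)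
    (hdir : ∀ i : Fin n,
      Submodule.span ℝ (⇑bM '' {j : Fin n | j ≤ i}) = Submodule.span ℝ (⇑b '' {j : Fin n | j ≤ i}))
    (hse : IsSE b (Submodule.span ℤ (Set.range b) : Set (EuclideanSpace ℝ (Fin n))) K α) :
    IsSE bM (Submodule.span ℤ (Set.range bM) : Set (EuclideanSpace ℝ (Fin n))) K
      (α * ((Submodule.span ℤ (Set.range b)).toAddSubgroup.relIndex
        (Submodule.span ℤ (Set.range bM)).toAddSubgroup : ℝ)) := by
  have : (span ℤ (range b)).toAddSubgroup.IsFiniteRelIndex (span ℤ (range bM)).toAddSubgroup :=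
    ⟨hfin.ne'⟩
  intro i t
  rw [gsProj_eq_of_span_image_le_eq hdir, gsProj_eq_starProjection]
  refine finite_ncard_image_inter_le_mul_relIndex (span ℝ (b '' {j | j < i}))ᗮ.starProjection
    (span ℤ (range b)).toAddSubgroup (span ℤ (range bM)).toAddSubgroup (K + {t}) fun v => ?_
  simpa only [gsProj_eq_starProjection, coe_toAddSubgroup, add_assoc, singleton_add_singleton]
    using hse i (t + v)

/-- If a convex body `K` is `α`-Schnorr–Euchner enumerable with respect to
a full-rank lattice `Λ = span ℤ (range b)` with basis `b`, and `M = span ℤ (range bM)` is a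
superlattice of `Λ` of finite index `[M : Λ]`, with `bM` a directional basis of `M` with
respect to `b`, then `K` is `(α · [M : Λ])`-Schnorr–Euchner enumerable with respect to `M`
with basis `bM`. -/
theorem stmt_6 (n : ℕ) (b bM : Module.Basis (Fin n) ℝ (EuclideanSpace ℝ (Fin n)))
    (K : Set (EuclideanSpace ℝ (Fin n)))
    (hKcpt : IsCompact K) (hKconv : Convex ℝ K) (hKint : (interior K).Nonempty)
    (α : ℝ)
    (hsup : Submodule.span ℤ (Set.range b) ≤ Submodule.span ℤ (Set.range bM))
    (hfin : 0 < (Submodule.span ℤ (Set.range b)).toAddSubgroup.relIndex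
      (Submodule.span ℤ (Set.range bM)).toAddSubgroup)
    (hdir : ∀ i : Fin n,
      Submodule.span ℝ (⇑bM '' {j : Fin n | j ≤ i}) = Submodule.span ℝ (⇑b '' {j : Fin n | j ≤ i}))
    (hse : IsSE b (Submodule.span ℤ (Set.range b) : Set (EuclideanSpace ℝ (Fin n))) K α) :
    IsSE bM (Submodule.span ℤ (Set.range bM) : Set (EuclideanSpace ℝ (Fin n))) K
      (α * ((Submodule.span ℤ (Set.range b)).toAddSubgroup.relIndex
        (Submodule.span ℤ (Set.range bM)).toAddSubgroup : ℝ)) :=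
  stmt_6_general n b bM K α hfin hdir hse
end

section
/- Let K ⊆ R^n be a symmetric convex body that is α-Schnorr–Euchner enumerable with respect to a full-rank lattice Λ with basis B. Then for every convex body C ⊆ R^n, C is (α · N(C, K))-Schnorr–Euchner enumerable with respect to Λ with basis B. -/
open MeasureTheory Pointwise


/-! Cover `C` by `N(C, K)` translates `s + K`; the infimum defining `N(C, K)` is attained because
a compact set is covered by finitely many translates of a set with nonempty interior. Then
`π_i(C + t) ∩ π_i(Λ)` lies in the union over the centres `s` of the sets `π_i(K + s + t) ∩ π_i(Λ)`,
each of which has at most `α` elements. -/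

lemma exists_card_eq_coveringNumber {E : Type*} [AddCommGroup E] {A B : Set E}
    (h : ∃ T : Finset E, A ⊆ ↑T + B) :
    ∃ T : Finset E, T.card = coveringNumber A B ∧ A ⊆ ↑T + B := by
  obtain ⟨T, hT⟩ := h
  exact Nat.sInf_mem (s := {m | ∃ T : Finset E, T.card = m ∧ A ⊆ ↑T + B}) ⟨T.card, T, rfl, hT⟩

lemma IsCompact.exists_finset_subset_add {E : Type*} [AddCommGroup E] [TopologicalSpace E]
    [IsTopologicalAddGroup E] {A B : Set E} (hA : IsCompact A) (hB : (interior B).Nonempty) :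
    ∃ T : Finset E, A ⊆ ↑T + B := by
  classical
  obtain ⟨t, ht⟩ := compact_covered_by_add_left_translates hA hB
  refine ⟨-t, fun x hx => ?_⟩
  obtain ⟨g, hg, hgx⟩ := Set.mem_iUnion₂.1 (ht hx)
  exact ⟨-g, by simpa using hg, g + x, hgx, neg_add_cancel_left g x⟩

lemma Finset.cast_ncard_biUnion_le_card_mul {ι E : Type*} (T : Finset ι) (A : ι → Set E) {a : ℝ}
    (h : ∀ i ∈ T, ((A i).ncard : ℝ) ≤ a) : ((⋃ i ∈ T, A i).ncard : ℝ) ≤ T.card * a :=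
  calc ((⋃ i ∈ T, A i).ncard : ℝ) ≤ ∑ i ∈ T, ((A i).ncard : ℝ) := by
        exact_mod_cast T.set_ncard_biUnion_le A
    _ ≤ T.card • a := Finset.sum_le_card_nsmul _ _ _ h
    _ = T.card * a := nsmul_eq_mul _ _

lemma Set.add_singleton_subset_biUnion_of_subset_add {E : Type*} [AddCommGroup E] {C K : Set E}
    {T : Finset E} (hC : C ⊆ ↑T + K) (t : E) : C + {t} ⊆ ⋃ s ∈ T, K + {s + t} := by
  simp only [Set.add_singleton]
  rintro _ ⟨c, hc, rfl⟩
  obtain ⟨s, hs, k, hk, rfl⟩ := hC hc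
  exact Set.mem_biUnion hs ⟨k, hk, by dsimp only; abel⟩

lemma IsSE.of_subset_finset_add {n : ℕ} {b : Module.Basis (Fin n) ℝ (EuclideanSpace ℝ (Fin n))}
    {L K C : Set (EuclideanSpace ℝ (Fin n))} {α : ℝ} {T : Finset (EuclideanSpace ℝ (Fin n))}
    (hK : IsSE b L K α) (hC : C ⊆ ↑T + K) : IsSE b L C (α * T.card) := by
  intro i t
  have hsub : gsProj b i '' (C + {t}) ∩ gsProj b i '' L ⊆
      ⋃ s ∈ T, gsProj b i '' (K + {s + t}) ∩ gsProj b i '' L := by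
    rw [← Set.iUnion₂_inter, ← Set.image_iUnion₂]
    exact Set.inter_subset_inter_left _
      (Set.image_mono (Set.add_singleton_subset_biUnion_of_subset_add hC t))
  have hfin := T.finite_toSet.biUnion fun s _ => (hK i (s + t)).1
  refine ⟨hfin.subset hsub, ?_⟩
  calc _ ≤ (((⋃ s ∈ T, gsProj b i '' (K + {s + t}) ∩ gsProj b i '' L).ncard : ℕ) : ℝ) := by
        exact_mod_cast Set.ncard_le_ncard hsub hfin
    _ ≤ T.card * α := T.cast_ncard_biUnion_le_card_mul _ fun s _ => (hK i (s + t)).2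
    _ = α * T.card := mul_comm _ _

theorem stmt_7_general (n : ℕ) (b : Module.Basis (Fin n) ℝ (EuclideanSpace ℝ (Fin n)))
    (K C : Set (EuclideanSpace ℝ (Fin n)))
    (hKint : (interior K).Nonempty)
    (hCcpt : IsCompact C)
    (α : ℝ)
    (hse : IsSE b (Submodule.span ℤ (Set.range b) : Set (EuclideanSpace ℝ (Fin n))) K α) :
    IsSE b (Submodule.span ℤ (Set.range b) : Set (EuclideanSpace ℝ (Fin n))) C
      (α * (coveringNumber C K : ℝ)) := by
  obtain ⟨T, hTcard, hTcover⟩ :=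
    exists_card_eq_coveringNumber (hCcpt.exists_finset_subset_add hKint)
  rw [← hTcard]
  exact hse.of_subset_finset_add hTcover

/-- If a symmetric convex body `K` is `α`-Schnorr–Euchner enumerable with
respect to a full-rank lattice `Λ = span ℤ (range b)` with basis `b`, then every convex body
`C` is `(α · N(C, K))`-Schnorr–Euchner enumerable with respect to `Λ` with basis `b`. -/
theorem stmt_7 (n : ℕ) (b : Module.Basis (Fin n) ℝ (EuclideanSpace ℝ (Fin n)))
    (K C : Set (EuclideanSpace ℝ (Fin n)))
    (hKcpt : IsCompact K) (hKconv : Convex ℝ K) (hKint : (interior K).Nonempty)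
    (hKsym : K = -K)
    (hCcpt : IsCompact C) (hCconv : Convex ℝ C) (hCint : (interior C).Nonempty)
    (α : ℝ)
    (hse : IsSE b (Submodule.span ℤ (Set.range b) : Set (EuclideanSpace ℝ (Fin n))) K α) :
    IsSE b (Submodule.span ℤ (Set.range b) : Set (EuclideanSpace ℝ (Fin n))) C
      (α * (coveringNumber C K : ℝ)) :=
  stmt_7_general n b K C hKint hCcpt α hse
end

section
/- Let K ⊆ R^n be a symmetric convex body, let Λ ⊆ R^n be a full-rank lattice with λ = λ_1(K, Λ), and suppose c ∈ (1/3)Λ \ Λ satisfies d_K(Λ, c) ≥ λ. Then Λ' = Λ + Zc is a full-rank lattice containing Λ with index [Λ' : Λ] = 3 (so det(Λ') = det(Λ)/3), and λ_1(K, Λ') = λ_1(K, Λ). -/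
open MeasureTheory Pointwise

/-- The minimum distance `λ₁(K, L) = inf {‖y‖_K : y ∈ L, y ≠ 0}` of a lattice (set) `L`
with respect to the gauge of `K`. -/
noncomputable def lambda1 {n : ℕ} (K L : Set (Fin n → ℝ)) : ℝ :=
  sInf (gauge K '' (L \ {0}))

/-!
Because `3 • c ∈ Λ`, every vector of `Λ' = Λ + ℤc` lies in one of the cosets `Λ`, `Λ + c`,
`Λ - c`. Hence `[Λ' : Λ] = 3` (the class of `c` has order 3 in the quotient), `Λ'` is discrete
(as `3Λ' ⊆ Λ`) and thus a lattice whose covolume is that of `Λ` divided by the index. A vector of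
`Λ' \ Λ` is `±(x - c)` with `x ∈ Λ`, so by the symmetry of `K` its gauge is at least
`d_K(Λ, c) ≥ λ₁(K, Λ)`: no new short vector appears.
-/

theorem AddSubgroup.relIndex_sup_zmultiples {G : Type*} [AddCommGroup G] (H : AddSubgroup G)
    (c : G) : H.relIndex (H ⊔ zmultiples c) = addOrderOf (c : G ⧸ H) := by
  let π := (QuotientAddGroup.mk' H).comp (H ⊔ zmultiples c).subtype
  have hker : π.ker = H.addSubgroupOf (H ⊔ zmultiples c) := by
    ext x
    simp [π, AddSubgroup.mem_addSubgroupOf]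
  have hrange : π.range = zmultiples (c : G ⧸ H) := by
    rw [AddMonoidHom.range_comp, AddSubgroup.range_subtype, AddSubgroup.map_sup,
      AddMonoidHom.map_zmultiples]
    simp
  rw [AddSubgroup.relIndex, ← hker, AddSubgroup.index_ker, hrange, Nat.card_zmultiples]

namespace Submodule

variable {M : Type*} [AddCommGroup M] {L : Submodule ℤ M} {c : M}

theorem relIndex_sup_span_singleton_of_prime {p : ℕ} [Fact p.Prime] (hpc : p • c ∈ L)
    (hc : c ∉ L) : L.toAddSubgroup.relIndex (L ⊔ span ℤ {c}).toAddSubgroup = p := by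
  rw [sup_toAddSubgroup, span_singleton_toAddSubgroup_eq_zmultiples,
    AddSubgroup.relIndex_sup_zmultiples]
  refine addOrderOf_eq_prime ?_ ?_
  · rwa [← QuotientAddGroup.mk_nsmul, QuotientAddGroup.eq_zero_iff]
  · rwa [Ne, QuotientAddGroup.eq_zero_iff]

theorem nsmul_mem_of_mem_sup_span {k : ℕ} {y : M} (hkc : k • c ∈ L)
    (hy : y ∈ L ⊔ span ℤ {c}) : k • y ∈ L := by
  obtain ⟨a, ha, _, hm, rfl⟩ := mem_sup.mp hy
  obtain ⟨m, rfl⟩ := mem_span_singleton.mp hm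
  rw [smul_add, smul_comm]
  exact L.add_mem (L.toAddSubmonoid.nsmul_mem ha k) (L.smul_mem m hkc)

theorem mem_or_add_mem_or_sub_mem_of_mem_sup_span {y : M} (h3c : 3 • c ∈ L)
    (hy : y ∈ L ⊔ span ℤ {c}) : y ∈ L ∨ y + c ∈ L ∨ y - c ∈ L := by
  obtain ⟨a, ha, _, hk, rfl⟩ := mem_sup.mp hy
  obtain ⟨k, rfl⟩ := mem_span_singleton.mp hk
  obtain ⟨q, r, rfl, hr⟩ : ∃ q r : ℤ, k = 3 * q + r ∧ (r = -1 ∨ r = 0 ∨ r = 1) :=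
    ⟨(k + 1) / 3, (k + 1) % 3 - 1, by omega, by omega⟩
  have hmem : a + q • 3 • c ∈ L := L.add_mem ha (L.smul_mem q h3c)
  have hsplit : a + (3 * q + r) • c = a + q • 3 • c + r • c := by module
  rcases hr with rfl | rfl | rfl
  · exact .inr (.inl (by rwa [hsplit, neg_one_smul, neg_add_cancel_right]))
  · exact .inl (by rwa [hsplit, zero_smul, add_zero])
  · exact .inr (.inr (by rwa [hsplit, one_smul, add_sub_cancel_right]))

theorem discreteTopology_of_forall_nsmul_mem [TopologicalSpace M] [IsTopologicalAddGroup M]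
    [NoZeroSMulDivisors ℕ M] {L' : Submodule ℤ M} [DiscreteTopology L] {k : ℕ} (hk : k ≠ 0)
    (h : ∀ x ∈ L', k • x ∈ L) : DiscreteTopology L' := by
  refine DiscreteTopology.of_continuous_injective (f := fun x : L' ↦ (⟨k • x, h x x.2⟩ : L)) ?_ ?_
  · exact ((continuous_const_smul k).comp continuous_subtype_val).subtype_mk _
  · exact fun x y hxy ↦ Subtype.ext (smul_right_injective M hk (congrArg Subtype.val hxy))

end Submodule

theorem IsZLattice.of_le {E : Type*} [NormedAddCommGroup E] [NormedSpace ℝ E]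
    {L L' : Submodule ℤ E} [DiscreteTopology L] [IsZLattice ℝ L] [DiscreteTopology L']
    (h : L ≤ L') : IsZLattice ℝ L' :=
  ⟨eq_top_iff.mpr ((IsZLattice.span_top (K := ℝ) (L := L)).symm.le.trans (Submodule.span_mono h))⟩

theorem IsZLattice.exists_basis_span_eq {E ι : Type*} [NormedAddCommGroup E] [NormedSpace ℝ E]
    [FiniteDimensional ℝ E] [Fintype ι] (b : Module.Basis ι ℝ E) (L : Submodule ℤ E)
    [DiscreteTopology L] [IsZLattice ℝ L] :
    ∃ b' : Module.Basis ι ℝ E, Submodule.span ℤ (Set.range b') = L := by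
  have hcard : Fintype.card (Module.Free.ChooseBasisIndex ℤ L) = Fintype.card ι := by
    rw [← Module.finrank_eq_card_chooseBasisIndex, ZLattice.rank ℝ L,
      Module.finrank_eq_card_basis b]
  exact ⟨((Module.Free.chooseBasis ℤ L).reindex (Fintype.equivOfCardEq hcard)).ofZLatticeBasis ℝ L,
    Module.Basis.ofZLatticeBasis_span ℝ L _⟩

theorem ZSpan.volume_fundamentalDomain_eq_relIndex_mul {ι : Type*} [Fintype ι]
    (b b' : Module.Basis ι ℝ (ι → ℝ))
    (h : Submodule.span ℤ (Set.range b) ≤ Submodule.span ℤ (Set.range b')) :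
    volume (fundamentalDomain b) =
      (Submodule.span ℤ (Set.range b)).toAddSubgroup.relIndex
        (Submodule.span ℤ (Set.range b')).toAddSubgroup * volume (fundamentalDomain b') := by
  have hvol (e : Module.Basis ι ℝ (ι → ℝ)) : volume (fundamentalDomain e) =
      ENNReal.ofReal (ZLattice.covolume (Submodule.span ℤ (Set.range e))) := by
    rw [ZLattice.covolume_eq_measure_fundamentalDomain _ volume (ZSpan.isAddFundamentalDomain e _),
      measureReal_def, ENNReal.ofReal_toReal (fundamentalDomain_isBounded e).measure_lt_top.ne]
  have hcov := ZLattice.covolume_div_covolume_eq_relIndex _ _ h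
  rw [div_eq_iff (ZLattice.covolume_ne_zero _ _)] at hcov
  rw [hvol, hvol, hcov, ENNReal.ofReal_mul (Nat.cast_nonneg _), ENNReal.ofReal_natCast]

section Gauge

variable {n : ℕ} {K : Set (Fin n → ℝ)}

theorem lambda1_le_gauge {L : Set (Fin n → ℝ)} {x : Fin n → ℝ} (hx : x ∈ L) (hx0 : x ≠ 0) :
    lambda1 K L ≤ gauge K x :=
  csInf_le ⟨0, by rintro _ ⟨y, -, rfl⟩; exact gauge_nonneg y⟩ ⟨x, ⟨hx, hx0⟩, rfl⟩

theorem gaugeDist_le_gauge_sub {L : Set (Fin n → ℝ)} {x y : Fin n → ℝ} (hy : y ∈ L) :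
    gaugeDist K L x ≤ gauge K (y - x) :=
  ciInf_le (f := fun y : L ↦ gauge K ((y : Fin n → ℝ) - x))
    ⟨0, by rintro _ ⟨y, rfl⟩; exact gauge_nonneg _⟩ ⟨y, hy⟩

theorem lambda1_eq_of_subset {L L' : Set (Fin n → ℝ)} (hLL' : L ⊆ L') (hL : (L \ {0}).Nonempty)
    (h : ∀ y ∈ L', y ∉ L → lambda1 K L ≤ gauge K y) : lambda1 K L' = lambda1 K L := by
  have hsub : L \ {0} ⊆ L' \ {0} := Set.sdiff_subset_sdiff_left hLL'
  refine le_antisymm ?_ (le_csInf ((hL.mono hsub).image _) ?_)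
  · exact csInf_le_csInf ⟨0, by rintro _ ⟨y, -, rfl⟩; exact gauge_nonneg y⟩ (hL.image _)
      (Set.image_mono hsub)
  · rintro _ ⟨y, ⟨hy, hy0⟩, rfl⟩
    by_cases hyL : y ∈ L
    · exact lambda1_le_gauge hyL hy0
    · exact h y hy hyL

theorem gaugeDist_le_gauge_of_add_mem_or_sub_mem (hK : ∀ x ∈ K, -x ∈ K)
    {L : Submodule ℤ (Fin n → ℝ)} {c y : Fin n → ℝ} (hy : y + c ∈ L ∨ y - c ∈ L) :
    gaugeDist K L c ≤ gauge K y := by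
  rcases hy with hy | hy
  · simpa using gaugeDist_le_gauge_sub (K := K) (x := c) hy
  · rw [← gauge_neg hK]
    simpa [neg_sub_left, add_comm] using gaugeDist_le_gauge_sub (K := K) (x := c) (L.neg_mem hy)

end Gauge

theorem stmt_10_general (n : ℕ) (K : Set (Fin n → ℝ))
    (hKsym : K = -K)
    (b : Module.Basis (Fin n) ℝ (Fin n → ℝ)) (c : Fin n → ℝ)
    (hc : c ∈ (3 : ℝ)⁻¹ • (Submodule.span ℤ (Set.range b) : Set (Fin n → ℝ)))
    (hcnot : c ∉ Submodule.span ℤ (Set.range b))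
    (hd : lambda1 K (Submodule.span ℤ (Set.range b) : Set (Fin n → ℝ))
      ≤ gaugeDist K (Submodule.span ℤ (Set.range b) : Set (Fin n → ℝ)) c) :
    Submodule.span ℤ (Set.range b) ≤ Submodule.span ℤ (Set.range b) ⊔ Submodule.span ℤ {c}
    ∧ (Submodule.span ℤ (Set.range b)).toAddSubgroup.relIndex
        (Submodule.span ℤ (Set.range b) ⊔ Submodule.span ℤ {c}).toAddSubgroup = 3
    ∧ (∃ b' : Module.Basis (Fin n) ℝ (Fin n → ℝ),
        Submodule.span ℤ (Set.range b') = Submodule.span ℤ (Set.range b) ⊔ Submodule.span ℤ {c}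
        ∧ volume (ZSpan.fundamentalDomain b') = volume (ZSpan.fundamentalDomain b) / 3)
    ∧ lambda1 K ((Submodule.span ℤ (Set.range b) ⊔ Submodule.span ℤ {c} : Submodule ℤ (Fin n → ℝ)) :
          Set (Fin n → ℝ))
      = lambda1 K (Submodule.span ℤ (Set.range b) : Set (Fin n → ℝ)) := by
  set Λ := Submodule.span ℤ (Set.range b)
  have h3c : 3 • c ∈ Λ := by
    obtain ⟨v, hv, rfl⟩ := hc
    rwa [← Nat.cast_smul_eq_nsmul ℝ, smul_smul, Nat.cast_ofNat, mul_inv_cancel₀ three_ne_zero,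
      one_smul]
  have hindex := Λ.relIndex_sup_span_singleton_of_prime (p := 3) h3c hcnot
  have : DiscreteTopology ↥(Λ ⊔ Submodule.span ℤ {c}) :=
    Submodule.discreteTopology_of_forall_nsmul_mem three_ne_zero
      fun _ ↦ Submodule.nsmul_mem_of_mem_sup_span h3c
  have : IsZLattice ℝ (Λ ⊔ Submodule.span ℤ {c}) := .of_le le_sup_left
  obtain ⟨b', hb'⟩ := IsZLattice.exists_basis_span_eq b (Λ ⊔ Submodule.span ℤ {c})
  refine ⟨le_sup_left, hindex, ⟨b', hb', ?_⟩, ?_⟩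
  · have hvol := ZSpan.volume_fundamentalDomain_eq_relIndex_mul b b' (hb' ▸ le_sup_left)
    rw [hb', hindex, Nat.cast_ofNat] at hvol
    exact (ENNReal.eq_div_iff three_ne_zero ENNReal.ofNat_ne_top).mpr hvol.symm
  · have hK : ∀ x ∈ K, -x ∈ K := fun x hx ↦ by rw [hKsym] at hx; exact Set.mem_neg.mp hx
    have hc0 : c ≠ 0 := by rintro rfl; exact hcnot Λ.zero_mem
    refine lambda1_eq_of_subset (le_sup_left : Λ ≤ _) ⟨3 • c, h3c, smul_ne_zero three_ne_zero hc0⟩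
      fun y hy hyΛ ↦ hd.trans (gaugeDist_le_gauge_of_add_mem_or_sub_mem hK ?_)
    exact (Submodule.mem_or_add_mem_or_sub_mem_of_mem_sup_span h3c hy).resolve_left hyΛ

/-- Let `K` be a symmetric convex body, `Λ = span ℤ (range b)` a full-rank
lattice with `λ = λ₁(K, Λ)`, and `c ∈ (1/3)Λ \ Λ` with `d_K(Λ, c) ≥ λ`.  Then
`Λ' = Λ + ℤc` is a full-rank lattice containing `Λ` with `[Λ' : Λ] = 3`
(so `det Λ' = det Λ / 3`), and `λ₁(K, Λ') = λ₁(K, Λ)`. -/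
theorem stmt_10 (n : ℕ) (K : Set (Fin n → ℝ))
    (hKcpt : IsCompact K) (hKconv : Convex ℝ K) (hKint : (interior K).Nonempty)
    (hKsym : K = -K)
    (b : Module.Basis (Fin n) ℝ (Fin n → ℝ)) (c : Fin n → ℝ)
    (hc : c ∈ (3 : ℝ)⁻¹ • (Submodule.span ℤ (Set.range b) : Set (Fin n → ℝ)))
    (hcnot : c ∉ Submodule.span ℤ (Set.range b))
    (hd : lambda1 K (Submodule.span ℤ (Set.range b) : Set (Fin n → ℝ))
      ≤ gaugeDist K (Submodule.span ℤ (Set.range b) : Set (Fin n → ℝ)) c) :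
    Submodule.span ℤ (Set.range b) ≤ Submodule.span ℤ (Set.range b) ⊔ Submodule.span ℤ {c}
    ∧ (Submodule.span ℤ (Set.range b)).toAddSubgroup.relIndex
        (Submodule.span ℤ (Set.range b) ⊔ Submodule.span ℤ {c}).toAddSubgroup = 3
    ∧ (∃ b' : Module.Basis (Fin n) ℝ (Fin n → ℝ),
        Submodule.span ℤ (Set.range b') = Submodule.span ℤ (Set.range b) ⊔ Submodule.span ℤ {c}
        ∧ volume (ZSpan.fundamentalDomain b') = volume (ZSpan.fundamentalDomain b) / 3)
    ∧ lambda1 K ((Submodule.span ℤ (Set.range b) ⊔ Submodule.span ℤ {c} : Submodule ℤ (Fin n → ℝ)) :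
          Set (Fin n → ℝ))
      = lambda1 K (Submodule.span ℤ (Set.range b) : Set (Fin n → ℝ)) :=
  stmt_10_general n K hKsym b c hc hcnot hd
end

section
/- Let K_0 ⊆ R^n be a convex body and let Λ ⊆ R^n be a full-rank lattice that is K_0-covering, i.e. Λ + K_0 = R^n. Then there exists a measurable set F ⊆ K_0 that tiles R^n with respect to Λ, i.e. every point of R^n lies in exactly one translate F + y with y ∈ Λ; in particular vol_n(F) = det(Λ). -/
/-!
Enumerate the lattice as `e₀, e₁, …`. Every point of the fundamental parallelepiped `D` lies in
some translate `eₖ + K₀`; cutting `D` into the pieces `Pₖ` of points for which `k` is the least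
such index and moving each `Pₖ` by `-eₖ` rearranges `D` into a subset `F` of `K₀`. Moving the
pieces of a tile by group elements yields again a tile, and two measurable tiles of the same
lattice have the same volume.
-/

open MeasureTheory Pointwise Set Function

section VAddTile

variable {G α : Type*} [AddGroup G] [AddAction G α]

theorem existsUnique_vadd_mem_iUnion_vadd {ι : Type*} {P : ι → Set α}
    (hP : Pairwise (Disjoint on P)) (hD : ∀ x, ∃! g : G, g +ᵥ x ∈ ⋃ i, P i) (t : ι → G)
    (x : α) : ∃! g : G, g +ᵥ x ∈ ⋃ i, t i +ᵥ P i := by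
  obtain ⟨g, hg, hg_unique⟩ := hD x
  obtain ⟨i, hi⟩ := mem_iUnion.1 hg
  refine ⟨t i + g, mem_iUnion.2 ⟨i, ?_⟩, ?_⟩
  · rw [add_vadd]
    exact vadd_mem_vadd_set hi
  · rintro h hh
    obtain ⟨j, p, hp, hpx⟩ := mem_iUnion.1 hh
    have hpg : -t j + h = g :=
      hg_unique _ (show _ ∈ _ by rw [add_vadd, ← hpx, neg_vadd_vadd]; exact mem_iUnion.2 ⟨j, hp⟩)
    have hij : i = j := hP.eq <| not_disjoint_iff.2
      ⟨g +ᵥ x, hi, by rwa [← hpg, add_vadd, ← hpx, neg_vadd_vadd]⟩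
    rw [hij, ← hpg, add_neg_cancel_left]

theorem exists_measurableSet_subset_existsUnique_vadd_mem [Countable G] [MeasurableSpace α]
    [MeasurableConstVAdd G α] {D K : Set α} (hDm : MeasurableSet D)
    (hD : ∀ x, ∃! g : G, g +ᵥ x ∈ D) (hKm : MeasurableSet K) (hK : ∀ x, ∃ g : G, g +ᵥ x ∈ K) :
    ∃ F ⊆ K, MeasurableSet F ∧ ∀ x, ∃! g : G, g +ᵥ x ∈ F := by
  obtain ⟨e, he⟩ := exists_surjective_nat G
  set A : ℕ → Set α := fun k => D ∩ (e k +ᵥ K)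
  have hA : ⋃ k, A k = D := by
    refine (iUnion_subset fun k => inter_subset_left).antisymm fun z hz => ?_
    obtain ⟨g, hg⟩ := hK z
    obtain ⟨k, hk⟩ := he (-g)
    exact mem_iUnion.2 ⟨k, hz, by rw [hk]; exact mem_vadd_set.2 ⟨g +ᵥ z, hg, neg_vadd_vadd g z⟩⟩
  refine ⟨⋃ k, -e k +ᵥ disjointed A k, ?_, ?_, ?_⟩
  · refine iUnion_subset fun k => ?_
    calc -e k +ᵥ disjointed A k ⊆ -e k +ᵥ (e k +ᵥ K) :=
          vadd_set_mono ((disjointed_subset A k).trans inter_subset_right)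
      _ = K := neg_vadd_vadd (e k) K
  · exact .iUnion fun k => (MeasurableSet.disjointed
      (fun j => hDm.inter (hKm.const_vadd (e j))) k).const_vadd _
  · rw [← hA, ← iUnion_disjointed] at hD
    exact existsUnique_vadd_mem_iUnion_vadd (disjoint_disjointed A) hD _

end VAddTile

theorem AddSubgroup.existsUnique_sub_mem_of_existsUnique_vadd_mem {E : Type*} [AddCommGroup E]
    {S : AddSubgroup E} {F : Set E} {x : E} (h : ∃! g : S, g +ᵥ x ∈ F) :
    ∃! y, y ∈ S ∧ x - y ∈ F := by
  obtain ⟨g, hg, hg_unique⟩ := h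
  refine ⟨-g, ⟨neg_mem g.2, ?_⟩, fun y ⟨hy, hyF⟩ => ?_⟩
  · rw [sub_neg_eq_add, add_comm]
    exact hg
  · have := hg_unique ⟨-y, neg_mem hy⟩ (show -y + x ∈ F by rwa [neg_add_eq_sub])
    rw [← this, neg_neg]

theorem stmt_14_general (n : ℕ) (K0 : Set (Fin n → ℝ))
    (hKcpt : IsCompact K0)
    (b : Module.Basis (Fin n) ℝ (Fin n → ℝ))
    (hcov : (Submodule.span ℤ (Set.range b) : Set (Fin n → ℝ)) + K0 = Set.univ) :
    ∃ F : Set (Fin n → ℝ), MeasurableSet F ∧ F ⊆ K0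
      ∧ (∀ x : Fin n → ℝ, ∃! y : Fin n → ℝ,
          y ∈ (Submodule.span ℤ (Set.range b) : Set (Fin n → ℝ)) ∧ x - y ∈ F)
      ∧ volume F = volume (ZSpan.fundamentalDomain b) := by
  set Λ := (Submodule.span ℤ (Set.range b)).toAddSubgroup
  -- Mathlib registers countability for the submodule, not for its underlying subgroup.
  have : Countable Λ := inferInstanceAs (Countable (Submodule.span ℤ (Set.range b)))
  have hK : ∀ x, ∃ g : Λ, g +ᵥ x ∈ K0 := fun x => by
    obtain ⟨y, hy, k, hk, rfl⟩ := hcov.symm ▸ mem_univ x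
    exact ⟨⟨-y, neg_mem hy⟩, by rwa [AddSubgroup.vadd_def, vadd_eq_add, neg_add_cancel_left]⟩
  obtain ⟨F, hFK, hFm, hF⟩ := exists_measurableSet_subset_existsUnique_vadd_mem (G := Λ)
    (ZSpan.fundamentalDomain_measurableSet b) (ZSpan.exist_unique_vadd_mem_fundamentalDomain b)
    hKcpt.measurableSet hK
  refine ⟨F, hFm, hFK,
    fun x => AddSubgroup.existsUnique_sub_mem_of_existsUnique_vadd_mem (S := Λ) (hF x), ?_⟩
  exact (IsAddFundamentalDomain.mk' hFm.nullMeasurableSet hF).measure_eq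
    (ZSpan.isAddFundamentalDomain' b volume)

/-- Let `K₀ ⊆ ℝⁿ` be a convex body and `Λ = span ℤ (range b)` a full-rank
lattice that is `K₀`-covering (`Λ + K₀ = ℝⁿ`).  Then there exists a measurable set `F ⊆ K₀`
tiling `ℝⁿ` with respect to `Λ` (every point lies in exactly one translate `F + y`, `y ∈ Λ`);
in particular `vol(F) = det(Λ)`. -/
theorem stmt_14 (n : ℕ) (K0 : Set (Fin n → ℝ))
    (hKcpt : IsCompact K0) (hKconv : Convex ℝ K0) (hKint : (interior K0).Nonempty)
    (b : Module.Basis (Fin n) ℝ (Fin n → ℝ))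
    (hcov : (Submodule.span ℤ (Set.range b) : Set (Fin n → ℝ)) + K0 = Set.univ) :
    ∃ F : Set (Fin n → ℝ), MeasurableSet F ∧ F ⊆ K0
      ∧ (∀ x : Fin n → ℝ, ∃! y : Fin n → ℝ,
          y ∈ (Submodule.span ℤ (Set.range b) : Set (Fin n → ℝ)) ∧ x - y ∈ F)
      ∧ volume F = volume (ZSpan.fundamentalDomain b) :=
  stmt_14_general n K0 hKcpt b hcov
end

section
/- Let K_0, K ⊆ R^n be convex bodies and let Λ ⊆ R^n be a full-rank lattice that is K_0-covering (Λ + K_0 = R^n). Then for every ε > 0: vol_n(K) ≤ ε^n · det(Λ) · |εΛ ∩ (K − εK_0)| ≤ vol_n(K + ε(K_0 − K_0)). -/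
/-!
Cut the lattice translates of a measurable set `A` with a fundamental domain `D` of `Λ`:
`vol A = ∑_{g ∈ Λ} vol((g + A) ∩ D) = ∫_D #{g ∈ Λ | x ∈ g + A} dx`, and `vol D = det Λ`.
Since `Λ + K₀` covers, every `x` is `γ + k₀` with `γ ∈ Λ`, `k₀ ∈ K₀`. Then `g ↦ γ - g` injects
`{g | x ∈ g + K}` into `Λ ∩ (K - K₀)`, and `s ↦ γ - s` injects `Λ ∩ (K - K₀)` into
`{g | x ∈ g + (K + (K₀ - K₀))}`, which bounds the integrand from both sides.
A general `ε` is the case `ε = 1` for the lattice `εΛ` and the body `εK₀`.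
-/
open MeasureTheory Pointwise Set
open scoped ENNReal

theorem Set.Finite.cast_natCard_eq_encard {α : Type*} {s : Set α} (hs : s.Finite) :
    (Nat.card s : ℝ≥0∞) = (s.encard : ℝ≥0∞) := by
  simp [Nat.card_coe_set_eq, ← hs.cast_ncard_eq]

section Counting

variable {α ι : Type*} [Countable ι] [MeasurableSpace α] (μ : Measure α) {A : ι → Set α}
  {D : Set α}

theorem tsum_measure_eq_lintegral_encard (hA : ∀ i, MeasurableSet (A i)) :
    ∑' i, μ (A i) = ∫⁻ x, ({i | x ∈ A i}.encard : ℝ≥0∞) ∂μ := by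
  calc ∑' i, μ (A i)
      = ∑' i, ∫⁻ x, (A i).indicator 1 x ∂μ := by simp_rw [lintegral_indicator_one (hA _)]
    _ = ∫⁻ x, ∑' i, (A i).indicator 1 x ∂μ :=
        (lintegral_tsum fun i => (measurable_one.indicator (hA i)).aemeasurable).symm
    _ = ∫⁻ x, ({i | x ∈ A i}.encard : ℝ≥0∞) ∂μ := lintegral_congr fun x => ?_
  rw [← ENNReal.tsum_set_one, tsum_subtype {i | x ∈ A i} fun _ => (1 : ℝ≥0∞)]
  exact tsum_congr fun i => by by_cases h : x ∈ A i <;> simp [h]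

theorem tsum_measure_inter_le_mul (hA : ∀ i, MeasurableSet (A i)) (hD : MeasurableSet D)
    {N : ℕ∞} (hN : ∀ x ∈ D, {i | x ∈ A i}.encard ≤ N) :
    ∑' i, μ (A i ∩ D) ≤ N * μ D := by
  simp_rw [← Measure.restrict_apply (hA _)]
  rw [tsum_measure_eq_lintegral_encard _ hA, ← setLIntegral_const]
  exact setLIntegral_mono' hD fun x hx => ENat.toENNReal_le.2 (hN x hx)

theorem mul_le_tsum_measure_inter (hA : ∀ i, MeasurableSet (A i)) (hD : MeasurableSet D)
    {N : ℕ∞} (hN : ∀ x ∈ D, N ≤ {i | x ∈ A i}.encard) :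
    N * μ D ≤ ∑' i, μ (A i ∩ D) := by
  simp_rw [← Measure.restrict_apply (hA _)]
  rw [tsum_measure_eq_lintegral_encard _ hA, ← setLIntegral_const]
  exact setLIntegral_mono' hD fun x hx => ENat.toENNReal_le.2 (hN x hx)

end Counting

section Translates

variable {G : Type*} [AddCommGroup G] (L : AddSubgroup G) {K K₀ : Set G} {γ k₀ : G}

theorem encard_setOf_mem_vadd_le (hγ : γ ∈ L) (hk₀ : k₀ ∈ K₀) :
    {g : L | γ + k₀ ∈ g +ᵥ K}.encard ≤ ((L : Set G) ∩ (K - K₀)).encard := by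
  refine encard_le_encard_of_injOn (f := fun g : L => γ - g) ?_
    (sub_right_injective.comp Subtype.val_injective).injOn
  rintro g ⟨k, hk, hgk⟩
  refine ⟨L.sub_mem hγ g.2, k, hk, k₀, hk₀, ?_⟩
  simp only [AddSubgroup.vadd_def, vadd_eq_add] at hgk ⊢
  rw [← sub_eq_zero, ← sub_eq_zero.2 hgk]
  abel

theorem encard_le_setOf_mem_vadd (hγ : γ ∈ L) (hk₀ : k₀ ∈ K₀) :
    ((L : Set G) ∩ (K - K₀)).encard ≤ {g : L | γ + k₀ ∈ g +ᵥ (K + (K₀ - K₀))}.encard := by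
  rw [← Subtype.val_injective.encard_image]
  refine encard_le_encard_of_injOn (f := fun s => γ - s) ?_ sub_right_injective.injOn
  rintro s ⟨hs, k, hk, k', hk', rfl⟩
  refine ⟨⟨γ - (k - k'), L.sub_mem hγ hs⟩,
    ⟨k + (k₀ - k'), add_mem_add hk (sub_mem_sub hk₀ hk'), ?_⟩, rfl⟩
  simp only [AddSubgroup.vadd_def, vadd_eq_add]
  abel

end Translates

section Lattice

open Submodule ZSpan

variable {E ι : Type*} [NormedAddCommGroup E] [NormedSpace ℝ E] [MeasurableSpace E]
  [BorelSpace E] (b : Module.Basis ι ℝ E) (μ : Measure E) {K K₀ : Set E}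

instance [Finite ι] : Countable (span ℤ (range b)).toAddSubgroup :=
  inferInstanceAs (Countable (span ℤ (range b)))

theorem measure_le_measure_fundamentalDomain_mul_encard [Finite ι] [μ.IsAddLeftInvariant]
    (hK : MeasurableSet K) (hcov : (span ℤ (range b) : Set E) + K₀ = univ) :
    μ K ≤ μ (fundamentalDomain b) * ((span ℤ (range b) : Set E) ∩ (K - K₀)).encard := by
  rw [(ZSpan.isAddFundamentalDomain' b μ).measure_eq_tsum K, mul_comm]
  refine tsum_measure_inter_le_mul μ (fun g => hK.const_vadd g)
    (fundamentalDomain_measurableSet b) fun x _ => ?_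
  obtain ⟨γ, hγ, k₀, hk₀, rfl⟩ := mem_add.1 (hcov.symm ▸ mem_univ x)
  exact encard_setOf_mem_vadd_le _ hγ hk₀

theorem measure_fundamentalDomain_mul_encard_le [Finite ι] [μ.IsAddLeftInvariant]
    (hK : MeasurableSet (K + (K₀ - K₀))) (hcov : (span ℤ (range b) : Set E) + K₀ = univ) :
    μ (fundamentalDomain b) * ((span ℤ (range b) : Set E) ∩ (K - K₀)).encard
      ≤ μ (K + (K₀ - K₀)) := by
  rw [(ZSpan.isAddFundamentalDomain' b μ).measure_eq_tsum (K + (K₀ - K₀)), mul_comm]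
  refine mul_le_tsum_measure_inter μ
    (fun g : (span ℤ (range b)).toAddSubgroup => hK.const_vadd g)
    (fundamentalDomain_measurableSet b) fun x _ => ?_
  obtain ⟨γ, hγ, k₀, hk₀, rfl⟩ := mem_add.1 (hcov.symm ▸ mem_univ x)
  exact encard_le_setOf_mem_vadd _ hγ hk₀

omit [MeasurableSpace E] [BorelSpace E] in
theorem coe_span_int_range_unitsSMul_const (c : ℝˣ) :
    (span ℤ (range (b.unitsSMul fun _ => c)) : Set E) = (c : ℝ) • (span ℤ (range b) : Set E) := by
  have : ⇑(b.unitsSMul fun _ => c) = fun i => (c : ℝ) • b i :=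
    funext fun i => b.unitsSMul_apply i
  rw [this, range_smul, span_smul, coe_pointwise_smul]

theorem measure_fundamentalDomain_unitsSMul_const [Fintype ι] [DecidableEq ι]
    [μ.IsAddHaarMeasure] (c : ℝˣ) :
    μ (fundamentalDomain (b.unitsSMul fun _ => c))
      = ENNReal.ofReal (|(c : ℝ)| ^ Fintype.card ι) * μ (fundamentalDomain b) := by
  rw [measure_fundamentalDomain _ μ b, Module.Basis.det_unitsSMul_self, Finset.prod_const,
    abs_pow, Finset.card_univ]

end Lattice

theorem stmt_15_general (n : ℕ) (K0 K : Set (Fin n → ℝ))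
    (hK0cpt : IsCompact K0)
    (hKcpt : IsCompact K)
    (b : Module.Basis (Fin n) ℝ (Fin n → ℝ))
    (hcov : (Submodule.span ℤ (Set.range b) : Set (Fin n → ℝ)) + K0 = Set.univ)
    (ε : ℝ) (hε : 0 < ε) :
    volume K ≤ ENNReal.ofReal (ε ^ n) * volume (ZSpan.fundamentalDomain b) *
        (Nat.card ↥((ε • (Submodule.span ℤ (Set.range b) : Set (Fin n → ℝ)))
          ∩ (K - ε • K0)) : ENNReal)
    ∧ ENNReal.ofReal (ε ^ n) * volume (ZSpan.fundamentalDomain b) *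
        (Nat.card ↥((ε • (Submodule.span ℤ (Set.range b) : Set (Fin n → ℝ)))
          ∩ (K - ε • K0)) : ENNReal)
      ≤ volume (K + ε • (K0 - K0)) := by
  set b' := b.unitsSMul fun _ => Units.mk0 ε hε.ne'
  have hΛ : (Submodule.span ℤ (range b') : Set (Fin n → ℝ))
      = ε • (Submodule.span ℤ (range b) : Set (Fin n → ℝ)) :=
    coe_span_int_range_unitsSMul_const b _
  have hcov' : (Submodule.span ℤ (range b') : Set (Fin n → ℝ)) + ε • K0 = univ := by
    rw [hΛ, ← smul_add, hcov, smul_set_univ₀ hε.ne']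
  have hvol : volume (ZSpan.fundamentalDomain b')
      = ENNReal.ofReal (ε ^ n) * volume (ZSpan.fundamentalDomain b) := by
    rw [measure_fundamentalDomain_unitsSMul_const, Units.val_mk0, abs_of_pos hε, Fintype.card_fin]
  have hfin : ((Submodule.span ℤ (range b') : Set (Fin n → ℝ)) ∩ (K - ε • K0)).Finite := by
    rw [inter_comm]
    exact ZSpan.setFinite_inter b' (hKcpt.isBounded.sub (hK0cpt.smul ε).isBounded)
  have hdiff : ε • K0 - ε • K0 = ε • (K0 - K0) := by
    rw [sub_eq_add_neg, sub_eq_add_neg, smul_add, smul_set_neg]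
  have hdiff_cpt : IsCompact (ε • K0 - ε • K0) := by
    rw [sub_eq_add_neg]
    exact (hK0cpt.smul ε).add (hK0cpt.smul ε).neg
  rw [← hΛ, ← hvol, hfin.cast_natCard_eq_encard, ← hdiff]
  exact ⟨measure_le_measure_fundamentalDomain_mul_encard b' volume hKcpt.measurableSet hcov',
    measure_fundamentalDomain_mul_encard_le b' volume (hKcpt.add hdiff_cpt).measurableSet hcov'⟩

/-- Let `K₀, K ⊆ ℝⁿ` be convex bodies and `Λ = span ℤ (range b)` a
full-rank lattice that is `K₀`-covering (`Λ + K₀ = ℝⁿ`).  Then for every `ε > 0`,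
`vol(K) ≤ εⁿ · det(Λ) · |εΛ ∩ (K − εK₀)| ≤ vol(K + ε(K₀ − K₀))`. -/
theorem stmt_15 (n : ℕ) (K0 K : Set (Fin n → ℝ))
    (hK0cpt : IsCompact K0) (hK0conv : Convex ℝ K0) (hK0int : (interior K0).Nonempty)
    (hKcpt : IsCompact K) (hKconv : Convex ℝ K) (hKint : (interior K).Nonempty)
    (b : Module.Basis (Fin n) ℝ (Fin n → ℝ))
    (hcov : (Submodule.span ℤ (Set.range b) : Set (Fin n → ℝ)) + K0 = Set.univ)
    (ε : ℝ) (hε : 0 < ε) :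
    volume K ≤ ENNReal.ofReal (ε ^ n) * volume (ZSpan.fundamentalDomain b) *
        (Nat.card ↥((ε • (Submodule.span ℤ (Set.range b) : Set (Fin n → ℝ)))
          ∩ (K - ε • K0)) : ENNReal)
    ∧ ENNReal.ofReal (ε ^ n) * volume (ZSpan.fundamentalDomain b) *
        (Nat.card ↥((ε • (Submodule.span ℤ (Set.range b) : Set (Fin n → ℝ)))
          ∩ (K - ε • K0)) : ENNReal)
      ≤ volume (K + ε • (K0 - K0)) :=
  stmt_15_general n K0 K hK0cpt hKcpt b hcov ε hε
end

section
/- Let K_0, K ⊆ R^n be convex bodies, let Λ ⊆ R^n be a full-rank lattice that is K_0-covering (Λ + K_0 = R^n), and suppose additionally that K_0 is symmetric (K_0 = −K_0) and K_0 ⊆ K − c for some c ∈ R^n. Then for every ε > 0: vol_n(K) ≤ ε^n · det(Λ) · |εΛ ∩ ((1 + ε)K − εc)| ≤ (1 + 2ε)^n · vol_n(K). -/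
/-!
Rescaling by `ε⁻¹` turns the count into `|Λ ∩ D|` with `D = (1 + ε)A - c`, `A = ε⁻¹K`, and
`K₀ ⊆ εA - c`. Since `Λ + K₀` is everything, `K₀` contains a fundamental domain `F` of `Λ`,
of volume `det Λ`. If `x ∈ A` lies in `g + F`, then `g ∈ A - K₀ = A + K₀ ⊆ D` by symmetry and
convexity, so `A` is covered by `|Λ ∩ D|` translates of `F`. Conversely these translates are
disjoint and lie in `D + K₀ ⊆ (1 + 2ε)A - 2c`.
-/

open MeasureTheory Pointwise

theorem exists_subset_forall_existsUnique_vadd_mem {G α : Type*} [AddGroup G] [Countable G]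
    [AddAction G α] [MeasurableSpace α] [MeasurableConstVAdd G α] {F K : Set α}
    (hF : MeasurableSet F) (hFu : ∀ x, ∃! g : G, g +ᵥ x ∈ F) (hK : MeasurableSet K)
    (hKcov : ∀ x, ∃ g : G, g +ᵥ x ∈ K) :
    ∃ F₀ ⊆ K, MeasurableSet F₀ ∧ ∀ x, ∃! g : G, g +ᵥ x ∈ F₀ := by
  obtain ⟨e, he⟩ := exists_surjective_nat G
  -- `F₀` moves each `y ∈ F` by the first `e i` that brings it into `K`.
  set P : ℕ → Set α := fun i => F ∩ (e i +ᵥ ·) ⁻¹' K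
  set Q := disjointed P
  have hQF : ∀ i, Q i ⊆ F := fun i => (disjointed_subset P i).trans Set.inter_subset_left
  refine ⟨⋃ i, e i +ᵥ Q i, ?_, ?_, fun x => ?_⟩
  · simp only [Set.iUnion_subset_iff, Set.vadd_set_subset_iff]
    exact fun i y hy => (disjointed_subset P i hy).2
  · exact .iUnion fun i => (MeasurableSet.disjointed
      (fun j => hF.inter (hK.preimage (measurable_const_vadd _))) i).const_vadd _
  obtain ⟨g₀, hg₀F, hg₀u⟩ := hFu x
  obtain ⟨g, hg⟩ := hKcov (g₀ +ᵥ x)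
  obtain ⟨i, rfl⟩ := he g
  obtain ⟨j, hj⟩ : ∃ j, g₀ +ᵥ x ∈ Q j := Set.mem_iUnion.1 <| by
    rw [iUnion_disjointed]; exact Set.mem_iUnion.2 ⟨i, hg₀F, hg⟩
  refine ⟨e j + g₀, Set.mem_iUnion.2 ⟨j, ?_⟩, fun g hg => ?_⟩
  · rw [add_vadd]; exact Set.vadd_mem_vadd_set hj
  obtain ⟨k, hk⟩ := Set.mem_iUnion.1 hg
  rw [Set.mem_vadd_set_iff_neg_vadd_mem, vadd_vadd] at hk
  have hg₀ : -e k + g = g₀ := hg₀u _ (hQF k hk)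
  rw [hg₀] at hk
  obtain rfl : k = j := by
    by_contra hkj
    exact Set.disjoint_left.1 (disjoint_disjointed P hkj) hk hj
  rw [← hg₀, add_neg_cancel_left]

theorem ZSpan.exists_isAddFundamentalDomain_subset {E ι : Type*} [NormedAddCommGroup E]
    [NormedSpace ℝ E] [MeasurableSpace E] [BorelSpace E] [Finite ι]
    (b : Module.Basis ι ℝ E) {K : Set E} (hK : MeasurableSet K)
    (hcov : (Submodule.span ℤ (Set.range b) : Set E) + K = Set.univ) (μ : Measure E) :
    ∃ F ⊆ K, IsAddFundamentalDomain (Submodule.span ℤ (Set.range b)).toAddSubgroup F μ := by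
  set L := (Submodule.span ℤ (Set.range b)).toAddSubgroup
  have : Countable L := inferInstanceAs (Countable (Submodule.span ℤ (Set.range b)))
  have hLcov (x : E) : ∃ g : L, g +ᵥ x ∈ K := by
    obtain ⟨l, hl, k, hk, rfl⟩ : x ∈ (L : Set E) + K := hcov ▸ Set.mem_univ x
    exact ⟨-⟨l, hl⟩, by rwa [AddSubgroup.vadd_def, vadd_eq_add, AddSubgroup.coe_neg,
      neg_add_cancel_left]⟩
  obtain ⟨F, hFK, hFm, hFu⟩ := exists_subset_forall_existsUnique_vadd_mem
    (fundamentalDomain_measurableSet b) (exist_unique_vadd_mem_fundamentalDomain b) hK hLcov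
  exact ⟨F, hFK, .mk' hFm.nullMeasurableSet hFu⟩

section Counting
variable {E : Type*} [AddGroup E] [MeasurableSpace E] {μ : Measure E} [μ.IsAddLeftInvariant]
  {T F : Set E}

theorem measure_add_le_encard_mul (hT : T.Countable) : μ (T + F) ≤ T.encard * μ F := by
  rw [← Set.iUnion_add_left_image]
  calc μ (⋃ t ∈ T, (t + ·) '' F) ≤ ∑' t : T, μ ((t : E) +ᵥ F) := measure_biUnion_le μ hT _
    _ = T.encard * μ F := by simp only [measure_vadd, ENNReal.tsum_set_const]

theorem MeasureTheory.IsAddFundamentalDomain.measure_add_eq_encard_mul [MeasurableAdd E]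
    {L : AddSubgroup E} [Countable L] (hF : IsAddFundamentalDomain L F μ) (hT : T ⊆ L) :
    μ (T + F) = T.encard * μ F := by
  set T' : Set L := Subtype.val ⁻¹' T
  have hTT' : Subtype.val '' T' = T :=
    Set.image_preimage_eq_of_subset (by rwa [Subtype.range_coe_subtype])
  have hunion : T + F = ⋃ g ∈ T', g +ᵥ F := by
    rw [← hTT', ← Set.iUnion_add_left_image, Set.biUnion_image]; rfl
  rw [hunion, measure_biUnion₀ T'.to_countable (hF.aedisjoint.set_pairwise T')
    fun g _ => hF.nullMeasurableSet_vadd g]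
  simp only [measure_vadd, ENNReal.tsum_set_const]
  rw [← hTT', Subtype.val_injective.encard_image]

end Counting

theorem smul_set_sub_singleton {M E : Type*} [Monoid M] [AddGroup E] [DistribMulAction M E]
    (a : M) (X : Set E) (d : E) : a • (X - {d}) = a • X - {a • d} := by
  rw [sub_eq_add_neg, smul_add, Set.smul_set_neg, Set.smul_set_singleton, ← sub_eq_add_neg]

theorem Convex.smul_sub_add_smul_sub {E : Type*} [AddCommGroup E] [Module ℝ E] {A : Set E}
    (hA : Convex ℝ A) {s t : ℝ} (hs : 0 ≤ s) (ht : 0 ≤ t) (c d : E) :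
    (s • A - {c}) + (t • A - {d}) = (s + t) • A - {c + d} := by
  rw [sub_add_sub_comm, ← hA.add_smul hs ht, Set.singleton_add_singleton]

section LatticePoints
variable {E : Type*} [AddCommGroup E] [Module ℝ E] [MeasurableSpace E] {μ : Measure E}
  {L : AddSubgroup E} [Countable L] {F K₀ A : Set E} {c : E} {ε : ℝ}

theorem measure_le_encard_inter_mul [μ.IsAddLeftInvariant] (hF : IsAddFundamentalDomain L F μ)
    (hFK₀ : F ⊆ K₀) (hK₀ : -K₀ = K₀) (hK₀A : K₀ ⊆ ε • A - {c}) (hA : Convex ℝ A) (hε : 0 ≤ ε) :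
    μ A ≤ ((L : Set E) ∩ ((1 + ε) • A - {c})).encard * μ F := by
  have hsub : A - K₀ ⊆ (1 + ε) • A - {c} := by
    rw [sub_eq_add_neg, hK₀, ← zero_add c, ← hA.smul_sub_add_smul_sub zero_le_one hε, one_smul,
      Set.singleton_zero, sub_zero]
    exact Set.add_subset_add_left hK₀A
  have hcover : A ≤ᵐ[μ] (L : Set E) ∩ ((1 + ε) • A - {c}) + F := by
    filter_upwards [hF.ae_covers] with x ⟨g, hg⟩ hx
    refine ⟨-g, ⟨(-g).2, ?_⟩, g +ᵥ x, hg, neg_add_cancel_left _ _⟩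
    have : x - (g +ᵥ x) = -(g : E) := by
      rw [AddSubgroup.vadd_def, vadd_eq_add]; abel
    exact this ▸ hsub (Set.sub_mem_sub hx (hFK₀ hg))
  calc μ A ≤ μ ((L : Set E) ∩ ((1 + ε) • A - {c}) + F) := measure_mono_ae hcover
    _ ≤ _ := measure_add_le_encard_mul ((Set.countable_coe_iff.1 ‹_›).mono Set.inter_subset_left)

theorem encard_inter_mul_le {E : Type*} [NormedAddCommGroup E] [NormedSpace ℝ E]
    [MeasurableSpace E] [BorelSpace E] [FiniteDimensional ℝ E] {μ : Measure E}
    [μ.IsAddHaarMeasure] {L : AddSubgroup E} [Countable L] {F K₀ A : Set E} {c : E} {ε : ℝ}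
    (hF : IsAddFundamentalDomain L F μ) (hFK₀ : F ⊆ K₀) (hK₀A : K₀ ⊆ ε • A - {c})
    (hA : Convex ℝ A) (hε : 0 ≤ ε) :
    ((L : Set E) ∩ ((1 + ε) • A - {c})).encard * μ F
      ≤ ENNReal.ofReal ((1 + 2 * ε) ^ Module.finrank ℝ E) * μ A := by
  have hsub : (L : Set E) ∩ ((1 + ε) • A - {c}) + F ⊆ (1 + 2 * ε) • A - {c + c} := by
    rw [two_mul, ← add_assoc, ← hA.smul_sub_add_smul_sub (by positivity) hε]
    exact Set.add_subset_add Set.inter_subset_right (hFK₀.trans hK₀A)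
  calc ((L : Set E) ∩ ((1 + ε) • A - {c})).encard * μ F
      = μ ((L : Set E) ∩ ((1 + ε) • A - {c}) + F) :=
        (hF.measure_add_eq_encard_mul Set.inter_subset_left).symm
    _ ≤ μ ((1 + 2 * ε) • A - {c + c}) := measure_mono hsub
    _ = μ ((1 + 2 * ε) • A) := by
        rw [Set.sub_singleton]; simp_rw [sub_eq_neg_add]; exact measure_vadd μ (-(c + c)) _
    _ = _ := μ.addHaar_smul_of_nonneg (by positivity) A

end LatticePoints

theorem measure_le_encard_smul_inter_mul_and_le {E : Type*} [NormedAddCommGroup E]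
    [NormedSpace ℝ E] [MeasurableSpace E] [BorelSpace E] [FiniteDimensional ℝ E] {μ : Measure E}
    [μ.IsAddHaarMeasure] {L : AddSubgroup E} [Countable L] {F K₀ K : Set E} {c : E} {ε : ℝ}
    (hF : IsAddFundamentalDomain L F μ) (hFK₀ : F ⊆ K₀) (hK₀ : -K₀ = K₀) (hK₀K : K₀ ⊆ K - {c})
    (hK : Convex ℝ K) (hε : 0 < ε) :
    μ K ≤ ENNReal.ofReal (ε ^ Module.finrank ℝ E) * μ F *
        ((ε • (L : Set E)) ∩ ((1 + ε) • K - {ε • c})).encard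
    ∧ ENNReal.ofReal (ε ^ Module.finrank ℝ E) * μ F *
        ((ε • (L : Set E)) ∩ ((1 + ε) • K - {ε • c})).encard
      ≤ ENNReal.ofReal ((1 + 2 * ε) ^ Module.finrank ℝ E) * μ K := by
  set A := ε⁻¹ • K
  have hεA : ε • A = K := smul_inv_smul₀ hε.ne' K
  have hset : (ε • (L : Set E)) ∩ ((1 + ε) • K - {ε • c})
      = ε • ((L : Set E) ∩ ((1 + ε) • A - {c})) := by
    rw [Set.smul_set_inter₀ hε.ne', smul_set_sub_singleton, smul_comm, hεA]
  rw [hset, ← Set.image_smul, (smul_right_injective E hε.ne').encard_image, ← hεA,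
    μ.addHaar_smul_of_nonneg hε.le]
  set N : ENNReal := (((L : Set E) ∩ ((1 + ε) • A - {c})).encard : ENNReal)
  have hK₀A : K₀ ⊆ ε • A - {c} := hεA ▸ hK₀K
  have hlower : μ A ≤ N * μ F := measure_le_encard_inter_mul hF hFK₀ hK₀ hK₀A (hK.smul ε⁻¹) hε.le
  have hupper := encard_inter_mul_le hF hFK₀ hK₀A (hK.smul ε⁻¹) hε.le
  constructor
  · calc ENNReal.ofReal (ε ^ Module.finrank ℝ E) * μ A
        ≤ ENNReal.ofReal (ε ^ Module.finrank ℝ E) * (N * μ F) := by gcongr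
      _ = _ := by ring
  · calc _ = ENNReal.ofReal (ε ^ Module.finrank ℝ E) * (N * μ F) := by ring
      _ ≤ ENNReal.ofReal (ε ^ Module.finrank ℝ E) *
          (ENNReal.ofReal ((1 + 2 * ε) ^ Module.finrank ℝ E) * μ A) := by gcongr
      _ = _ := by ring

theorem stmt_16_general (n : ℕ) (K0 K : Set (Fin n → ℝ))
    (hK0cpt : IsCompact K0)
    (hKcpt : IsCompact K) (hKconv : Convex ℝ K)
    (b : Module.Basis (Fin n) ℝ (Fin n → ℝ))
    (hcov : (Submodule.span ℤ (Set.range b) : Set (Fin n → ℝ)) + K0 = Set.univ)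
    (hK0sym : K0 = -K0) (c : Fin n → ℝ) (hK0sub : K0 ⊆ K - {c})
    (ε : ℝ) (hε : 0 < ε) :
    volume K ≤ ENNReal.ofReal (ε ^ n) * volume (ZSpan.fundamentalDomain b) *
        (Nat.card ↥((ε • (Submodule.span ℤ (Set.range b) : Set (Fin n → ℝ)))
          ∩ ((1 + ε) • K - {ε • c})) : ENNReal)
    ∧ ENNReal.ofReal (ε ^ n) * volume (ZSpan.fundamentalDomain b) *
        (Nat.card ↥((ε • (Submodule.span ℤ (Set.range b) : Set (Fin n → ℝ)))
          ∩ ((1 + ε) • K - {ε • c})) : ENNReal)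
      ≤ ENNReal.ofReal ((1 + 2 * ε) ^ n) * volume K := by
  have : Countable (Submodule.span ℤ (Set.range b)).toAddSubgroup :=
    inferInstanceAs (Countable (Submodule.span ℤ (Set.range b)))
  obtain ⟨F, hFK0, hF⟩ :=
    ZSpan.exists_isAddFundamentalDomain_subset b hK0cpt.measurableSet hcov volume
  have hfin : ((ε • (Submodule.span ℤ (Set.range b) : Set (Fin n → ℝ)))
      ∩ ((1 + ε) • K - {ε • c})).Finite := by
    have hbdd : Bornology.IsBounded (ε⁻¹ • ((1 + ε) • K - {ε • c})) := by
      rw [Set.sub_singleton]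
      exact (((hKcpt.smul (1 + ε)).image (continuous_sub_right _)).smul ε⁻¹).isBounded
    rw [← smul_inv_smul₀ hε.ne' ((1 + ε) • K - {ε • c}), ← Set.smul_set_inter₀ hε.ne']
    exact ((ZSpan.setFinite_inter b hbdd).smul_set).subset (by rw [Set.inter_comm])
  rw [Nat.card_coe_set_eq, ← ENat.toENNReal_coe, hfin.cast_ncard_eq,
    ← hF.measure_eq (ZSpan.isAddFundamentalDomain' b volume)]
  simpa only [Module.finrank_fin_fun, Submodule.coe_toAddSubgroup] using
    measure_le_encard_smul_inter_mul_and_le hF hFK0 hK0sym.symm hK0sub hKconv hε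

/-- Let `K₀, K ⊆ ℝⁿ` be convex bodies, `Λ = span ℤ (range b)` a
`K₀`-covering full-rank lattice, with `K₀` symmetric and `K₀ ⊆ K − c` for some `c`.
Then for every `ε > 0`,
`vol(K) ≤ εⁿ · det(Λ) · |εΛ ∩ ((1+ε)K − εc)| ≤ (1+2ε)ⁿ · vol(K)`. -/
theorem stmt_16 (n : ℕ) (K0 K : Set (Fin n → ℝ))
    (hK0cpt : IsCompact K0) (hK0conv : Convex ℝ K0) (hK0int : (interior K0).Nonempty)
    (hKcpt : IsCompact K) (hKconv : Convex ℝ K) (hKint : (interior K).Nonempty)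
    (b : Module.Basis (Fin n) ℝ (Fin n → ℝ))
    (hcov : (Submodule.span ℤ (Set.range b) : Set (Fin n → ℝ)) + K0 = Set.univ)
    (hK0sym : K0 = -K0) (c : Fin n → ℝ) (hK0sub : K0 ⊆ K - {c})
    (ε : ℝ) (hε : 0 < ε) :
    volume K ≤ ENNReal.ofReal (ε ^ n) * volume (ZSpan.fundamentalDomain b) *
        (Nat.card ↥((ε • (Submodule.span ℤ (Set.range b) : Set (Fin n → ℝ)))
          ∩ ((1 + ε) • K - {ε • c})) : ENNReal)
    ∧ ENNReal.ofReal (ε ^ n) * volume (ZSpan.fundamentalDomain b) *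
        (Nat.card ↥((ε • (Submodule.span ℤ (Set.range b) : Set (Fin n → ℝ)))
          ∩ ((1 + ε) • K - {ε • c})) : ENNReal)
      ≤ ENNReal.ofReal ((1 + 2 * ε) ^ n) * volume K :=
  stmt_16_general n K0 K hK0cpt hKcpt hKconv b hcov hK0sym c hK0sub ε hε
end

section
/- Let K ⊆ R^n be a convex body. Then ∫_{R^n} vol_n(K[c]) dc = 2^{−n} · vol_n(K)^2, where K[c] = (K − c) ∩ (c − K); moreover K[c] is nonempty only for c ∈ K, so the integral may be taken over K. In particular there exists c ∈ K with vol_n(K[c]) ≥ 2^{−n} · vol_n(K), i.e. the Kovner–Besicovitch symmetry measure satisfies Sym_kb(K) = max_{c ∈ K} vol_n(K[c])/vol_n(K) ≥ 2^{−n}. -/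
/-!
Translating by `c` gives `vol(K[c]) = vol(K ∩ (2c - K))`. By Tonelli on
`{(c, u) | u ∈ K, 2c - u ∈ K}`, integrating over `c` first, each `u ∈ K` contributes
`vol {c | 2c - u ∈ K} = vol(K) / 2ⁿ`, so `∫ vol(K[c]) dc = vol(K)² / 2ⁿ`. For convex `K`, `K[c]` is
empty unless `c ∈ K` (`c` is the midpoint of `c + x` and `c - x`), so the integrand lives on `K`
and somewhere on `K` it is at least its average `vol(K) / 2ⁿ`.
-/

open MeasureTheory Module Set
open scoped Pointwise ENNReal

section AddCommGroup

variable {E : Type*} [AddCommGroup E] {K : Set E} {c : E}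

/-- The paper's `K[c]`. -/
def symmetricCore (K : Set E) (c : E) : Set E := (K - {c}) ∩ ({c} - K)

theorem mem_symmetricCore {x : E} : x ∈ symmetricCore K c ↔ c + x ∈ K ∧ c - x ∈ K := by
  simp only [symmetricCore, mem_inter_iff, sub_singleton, singleton_sub, mem_image]
  constructor
  · rintro ⟨⟨y, hy, rfl⟩, z, hz, hz_eq⟩
    rw [add_sub_cancel, ← hz_eq, sub_sub_cancel]
    exact ⟨hy, hz⟩
  · rintro ⟨h₁, h₂⟩
    exact ⟨⟨c + x, h₁, add_sub_cancel_left c x⟩, c - x, h₂, sub_sub_cancel c x⟩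

variable [Module ℝ E]

theorem symmetricCore_eq_preimage (K : Set E) (c : E) :
    symmetricCore K c = (c + ·) ⁻¹' (K ∩ ((2 : ℝ) • c - ·) ⁻¹' K) := by
  ext x
  rw [mem_symmetricCore, two_smul]
  simp only [mem_preimage, mem_inter_iff, add_sub_add_left_eq_sub]

theorem Convex.mem_of_symmetricCore_nonempty (hK : Convex ℝ K)
    (h : (symmetricCore K c).Nonempty) : c ∈ K := by
  obtain ⟨x, hx⟩ := h
  rw [mem_symmetricCore] at hx
  simpa only [midpoint_add_sub] using hK.midpoint_mem hx.1 hx.2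

end AddCommGroup

section AddHaar

variable {E : Type*} [NormedAddCommGroup E] [NormedSpace ℝ E] [MeasurableSpace E] [BorelSpace E]
  [FiniteDimensional ℝ E] (μ : Measure E) [μ.IsAddHaarMeasure] {K : Set E}

theorem addHaar_preimage_two_smul_sub (K : Set E) (u : E) :
    μ (((2 : ℝ) • · - u) ⁻¹' K) = μ K / 2 ^ finrank ℝ E := by
  have hpre : ((2 : ℝ) • · - u) ⁻¹' K = ((2 : ℝ) • ·) ⁻¹' ((· - u) ⁻¹' K) := rfl
  rw [hpre, Measure.addHaar_preimage_smul μ two_ne_zero]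
  simp only [sub_eq_add_neg, measure_preimage_add_right]
  rw [abs_of_pos (by positivity), ENNReal.ofReal_inv_of_pos (by positivity),
    ENNReal.ofReal_pow zero_le_two, ENNReal.ofReal_ofNat, ENNReal.div_eq_inv_mul]

theorem lintegral_measure_symmetricCore (hK : MeasurableSet K) :
    ∫⁻ c, μ (symmetricCore K c) ∂μ = μ K ^ 2 / 2 ^ finrank ℝ E := by
  set S : Set (E × E) := {p | p.2 ∈ K ∧ (2 : ℝ) • p.1 - p.2 ∈ K}
  have hS : MeasurableSet S :=
    (measurable_snd hK).inter (((measurable_fst.const_smul (2 : ℝ)).sub measurable_snd) hK)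
  have hslice (u : E) :
      μ ((·, u) ⁻¹' S) = K.indicator (fun _ ↦ μ K / 2 ^ finrank ℝ E) u := by
    by_cases hu : u ∈ K
    · rw [indicator_of_mem hu, ← addHaar_preimage_two_smul_sub μ K u]
      congr 1
      ext c
      simp [S, hu]
    · rw [indicator_of_notMem hu, ← measure_empty (μ := μ)]
      congr 1
      ext c
      simp [S, hu]
  calc ∫⁻ c, μ (symmetricCore K c) ∂μ = ∫⁻ c, μ (Prod.mk c ⁻¹' S) ∂μ := by
        simp only [symmetricCore_eq_preimage, measure_preimage_add]
        rfl
    _ = ∫⁻ u, μ ((·, u) ⁻¹' S) ∂μ := by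
        rw [← Measure.prod_apply hS, Measure.prod_apply_symm hS]
    _ = μ K ^ 2 / 2 ^ finrank ℝ E := by
        rw [lintegral_congr hslice, lintegral_indicator_const hK, sq, mul_div_assoc, mul_comm]

theorem Convex.exists_measure_div_two_pow_le_measure_symmetricCore (hKc : Convex ℝ K)
    (hK : MeasurableSet K) (h₀ : μ K ≠ 0) (h_top : μ K ≠ ∞) :
    ∃ c ∈ K, μ K / 2 ^ finrank ℝ E ≤ μ (symmetricCore K c) := by
  have hsupp : (fun c ↦ μ (symmetricCore K c)).support ⊆ K := fun c hc ↦
    hKc.mem_of_symmetricCore_nonempty (nonempty_of_measure_ne_zero hc)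
  have hint : ∫⁻ c in K, μ (symmetricCore K c) ∂μ = μ K ^ 2 / 2 ^ finrank ℝ E := by
    rw [setLIntegral_eq_of_support_subset hsupp, lintegral_measure_symmetricCore μ hK]
  obtain ⟨c, hc, hle⟩ := exists_setLAverage_le h₀ hK.nullMeasurableSet
    (hint ▸ ENNReal.div_ne_top (ENNReal.pow_ne_top h_top) (by positivity))
  refine ⟨c, hc, le_of_eq_of_le ?_ hle⟩
  rw [setLAverage_eq, hint, sq, mul_div_assoc, mul_comm, ENNReal.mul_div_cancel_right h₀ h_top]

end AddHaar

/-- For a convex body `K ⊆ ℝⁿ`,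
`∫_{ℝⁿ} vol(K[c]) dc = 2^{−n} vol(K)²` where `K[c] = (K − c) ∩ (c − K)`; moreover `K[c]` is
nonempty only for `c ∈ K`, and there exists `c ∈ K` with `vol(K[c]) ≥ 2^{−n} vol(K)`,
i.e. the Kovner–Besicovitch symmetry measure of `K` is at least `2^{−n}`. -/
theorem stmt_19 (n : ℕ) (K : Set (Fin n → ℝ))
    (hKcpt : IsCompact K) (hKconv : Convex ℝ K) (hKint : (interior K).Nonempty) :
    (∫⁻ c : Fin n → ℝ, volume ((K - {c}) ∩ ({c} - K))) = volume K ^ 2 / 2 ^ n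
    ∧ (∀ c : Fin n → ℝ, ((K - {c}) ∩ ({c} - K)).Nonempty → c ∈ K)
    ∧ ∃ c ∈ K, volume K / 2 ^ n ≤ volume ((K - {c}) ∩ ({c} - K)) := by
  have hK : MeasurableSet K := hKcpt.isClosed.measurableSet
  have hdim : finrank ℝ (Fin n → ℝ) = n := finrank_fin_fun ℝ
  have h₀ : volume K ≠ 0 :=
    ((isOpen_interior.measure_pos volume hKint).trans_le (measure_mono interior_subset)).ne'
  refine ⟨?_, fun c ↦ hKconv.mem_of_symmetricCore_nonempty, ?_⟩
  · have h := lintegral_measure_symmetricCore volume hK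
    rwa [hdim] at h
  · have h := hKconv.exists_measure_div_two_pow_le_measure_symmetricCore volume hK h₀
      hKcpt.measure_lt_top.ne
    rwa [hdim] at h
end
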